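/- arXiv:2401.10346 — 7 statements merged into one kernel-verified Lean document; each statement's English description precedes it below -/
import Mathlib

section
/- Let x̄ ∈ Φ⁻¹(int(dom f)) ∩ dom g be an optimal solution of the problem min_{x∈X} f(Φx) + g(x), and set ȳ := −Φ*∇f(Φx̄) (so that ȳ ∈ ∂g(x̄)). Then x̄ is the unique optimal solution of this problem if and only if Ker Φ ∩ R_{∂g*(ȳ)}(x̄) = {0}. -/
open Filter Set

/-- The radial cone `R_Ω(x) = ℝ₊ (Ω − x)` of a set `Ω` at a point `x`. -/
def radialCone {M : Type*} [AddCommGroup M] [Module ℝ M] (Ω : Set M) (x : M) : Set M :=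
  {w | ∃ t : ℝ, 0 ≤ t ∧ ∃ z ∈ Ω, w = t • (z - x)}

/-- Subdifferential of an extended-real-valued convex function encoded by its domain `domg`
and real values `g` on the domain: `∂g(x) = {v | g(z) − g(x) ≥ ⟨v, z − x⟩ ∀ z}`
(the inequality is automatic outside the domain, where `g = +∞`). -/
def subdiffD {X : Type*} [NormedAddCommGroup X] [InnerProductSpace ℝ X]
    (domg : Set X) (g : X → ℝ) (x : X) : Set X :=
  {v | x ∈ domg ∧ ∀ z ∈ domg, (inner ℝ v (z - x) : ℝ) ≤ g z - g x}

/-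
If `x̄` and `x` both minimize `f ∘ Φ + g`, convexity forces `f` to be affine on the segment
`[Φ x̄, Φ x]`, which a positive definite Hessian at its midpoint rules out unless `Φ x = Φ x̄`.
On the fibre `Φ x = Φ x̄` the objective differs from `g` by a constant, and `ȳ ⊥ Ker Φ`, so the
minimizers are exactly the points `z` with `Φ z = Φ x̄` and `ȳ ∈ ∂g(z)`; uniqueness means
that this set is `{x̄}`, i.e. that `Ker Φ` meets the radial cone of `∂g*(ȳ) = {z | ȳ ∈ ∂g(z)}` at `x̄`
only in `0`.
-/

open Topology AffineMap

theorem inter_radialCone_eq_singleton_zero_iff {M : Type*} [AddCommGroup M] [Module ℝ M]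
    (K : Submodule ℝ M) {Ω : Set M} {x : M} (hx : x ∈ Ω) :
    (K : Set M) ∩ radialCone Ω x = {0} ↔ ∀ z ∈ Ω, z - x ∈ K → z = x := by
  constructor
  · intro h z hz hzK
    have hmem : z - x ∈ (K : Set M) ∩ radialCone Ω x :=
      ⟨hzK, 1, zero_le_one, z, hz, (one_smul ℝ _).symm⟩
    rw [h] at hmem
    exact sub_eq_zero.mp hmem
  · intro h
    refine eq_singleton_iff_unique_mem.2 ⟨⟨K.zero_mem, 0, le_rfl, x, hx, (zero_smul ℝ _).symm⟩, ?_⟩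
    rintro _ ⟨hw, t, -, z, hz, rfl⟩
    rcases eq_or_ne t 0 with rfl | ht
    · exact zero_smul ℝ _
    · rw [h z hz ((K.smul_mem_iff ht).1 hw), sub_self, smul_zero]

theorem mem_subdiffD_iff_of_mem {X : Type*} [NormedAddCommGroup X] [InnerProductSpace ℝ X]
    {domg : Set X} {g : X → ℝ} {x z v : X} (hx : v ∈ subdiffD domg g x) :
    v ∈ subdiffD domg g z ↔ z ∈ domg ∧ g z - g x = inner ℝ v (z - x) := by
  constructor
  · intro hz
    have h₁ := hx.2 z hz.1
    have h₂ := hz.2 x hx.1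
    rw [inner_sub_right] at h₁ h₂ ⊢
    exact ⟨hz.1, by linarith⟩
  · rintro ⟨hz, hgz⟩
    refine ⟨hz, fun w hw => ?_⟩
    have h := hx.2 w hw
    rw [inner_sub_right] at h hgz ⊢
    linarith

theorem ConvexOn.apply_combo_eq_of_isMinOn_add {E : Type*} [AddCommGroup E] [Module ℝ E]
    {s t : Set E} {F G : E → ℝ} (hF : ConvexOn ℝ s F) (hG : ConvexOn ℝ t G) {a b : E}
    (ha : a ∈ s ∩ t) (hb : b ∈ s ∩ t) (hmin : IsMinOn (F + G) (s ∩ t) a)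
    (hba : (F + G) b ≤ (F + G) a) {θ : ℝ} (hθ₀ : 0 ≤ θ) (hθ₁ : θ ≤ 1) :
    F ((1 - θ) • a + θ • b) = (1 - θ) * F a + θ * F b := by
  have hθ : 0 ≤ 1 - θ := sub_nonneg.2 hθ₁
  have hF_le := hF.2 ha.1 hb.1 hθ hθ₀ (sub_add_cancel 1 θ)
  have hG_le := hG.2 ha.2 hb.2 hθ hθ₀ (sub_add_cancel 1 θ)
  have h_ge := isMinOn_iff.1 hmin _
    ⟨hF.1 ha.1 hb.1 hθ hθ₀ (sub_add_cancel 1 θ), hG.1 ha.2 hb.2 hθ hθ₀ (sub_add_cancel 1 θ)⟩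
  simp only [smul_eq_mul, Pi.add_apply] at hF_le hG_le h_ge hba
  nlinarith [mul_le_mul_of_nonneg_left hba hθ₀]

section Hessian

variable {Y : Type*} [NormedAddCommGroup Y] [InnerProductSpace ℝ Y] [CompleteSpace Y]

theorem inner_fderiv_gradient_eq_zero_of_eventuallyEq_affine {f : Y → ℝ} {a b : Y} {s c d : ℝ}
    (hf : ContDiffAt ℝ 2 f (lineMap a b s))
    (heq : (fun t => f (lineMap a b t)) =ᶠ[𝓝 s] fun t => c + t * d) :
    inner ℝ (fderiv ℝ (gradient f) (lineMap a b s) (b - a)) (b - a) = 0 := by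
  set ψ : ℝ → ℝ := fun t => inner ℝ (gradient f (lineMap a b t)) (b - a)
  have hdiff : ∀ᶠ t in 𝓝 s, DifferentiableAt ℝ f (lineMap a b t) :=
    (AffineMap.lineMap_continuous.continuousAt.eventually (hf.eventually (by simp))).mono
      fun t ht => ht.differentiableAt (by norm_num)
  have hψ_const : ψ =ᶠ[𝓝 s] fun _ => d := by
    filter_upwards [hdiff, heq.deriv] with t ht hdt
    have hψ : HasDerivAt (fun t => f (lineMap a b t)) (ψ t) t := by
      have h := ht.hasGradientAt.hasFDerivAt.comp_hasDerivAt t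
        (hasDerivAt_lineMap (a := a) (b := b))
      rwa [InnerProductSpace.toDual_apply_apply] at h
    have hd : HasDerivAt (fun t : ℝ => c + t * d) d t := by
      simpa using ((hasDerivAt_id t).mul_const d).const_add c
    rw [← hψ.deriv, ← hd.deriv, hdt]
  have hgrad : DifferentiableAt ℝ (gradient f) (lineMap a b s) :=
    (((InnerProductSpace.toDual ℝ Y).symm.contDiff.contDiffAt.comp _
      (hf.fderiv_right (m := 1) (by norm_num))).differentiableAt one_ne_zero :)
  have hψ' : HasDerivAt ψ
      (inner ℝ (fderiv ℝ (gradient f) (lineMap a b s) (b - a)) (b - a)) s := by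
    have h := (hgrad.hasFDerivAt.comp_hasDerivAt s hasDerivAt_lineMap).inner ℝ
      (hasDerivAt_const s (b - a))
    rwa [inner_zero_right, zero_add] at h
  exact hψ'.unique ((hasDerivAt_const s d).congr_of_eventuallyEq hψ_const)

end Hessian

theorem map_eq_of_isMinOn_comp_add {X Y : Type*} [AddCommGroup X] [Module ℝ X]
    [NormedAddCommGroup Y] [InnerProductSpace ℝ Y] [CompleteSpace Y]
    (Φ : X →ₗ[ℝ] Y) {domf : Set Y} {f : Y → ℝ} {domg : Set X} {g : X → ℝ}
    (hf_conv : ConvexOn ℝ domf f) (hf_C2 : ContDiffOn ℝ 2 f (interior domf))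
    (hf_posdef : ∀ y ∈ interior domf, ∀ w : Y, w ≠ 0 →
      0 < inner ℝ (fderiv ℝ (gradient f) y w) w)
    (hg_conv : ConvexOn ℝ domg g) {xb x : X} (hxb : xb ∈ Φ ⁻¹' interior domf ∩ domg)
    (hmin : IsMinOn (f ∘ Φ + g) (Φ ⁻¹' domf ∩ domg) xb) (hx : x ∈ Φ ⁻¹' domf ∩ domg)
    (hle : (f ∘ Φ + g) x ≤ (f ∘ Φ + g) xb) : Φ x = Φ xb := by
  by_contra hne
  have hsegment : ∀ θ ∈ Icc (0 : ℝ) 1,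
      f ((1 - θ) • Φ xb + θ • Φ x) = (1 - θ) * f (Φ xb) + θ * f (Φ x) := fun θ hθ => by
    simpa only [Function.comp_apply, map_add, map_smul] using
      (hf_conv.comp_linearMap Φ).apply_combo_eq_of_isMinOn_add hg_conv
        ⟨interior_subset (s := domf) hxb.1, hxb.2⟩ hx hmin hle hθ.1 hθ.2
  have hmid : lineMap (Φ xb) (Φ x) (1 / 2 : ℝ) ∈ interior domf := by
    rw [lineMap_apply_module]
    exact hf_conv.1.combo_interior_closure_mem_interior hxb.1 (subset_closure hx.1)
      (by norm_num) (by norm_num) (by norm_num)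
  have hflat := inner_fderiv_gradient_eq_zero_of_eventuallyEq_affine
    (c := f (Φ xb)) (d := f (Φ x) - f (Φ xb))
    ((hf_C2 _ hmid).contDiffAt (isOpen_interior.mem_nhds hmid)) <| by
      filter_upwards [Icc_mem_nhds (by norm_num : (0 : ℝ) < 1 / 2) (by norm_num : (1 / 2 : ℝ) < 1)]
        with t ht
      rw [lineMap_apply_module, hsegment t ht]
      ring
  exact (hf_posdef _ hmid _ (sub_ne_zero.2 hne)).ne' hflat

theorem solution_uniqueness_via_radial_cone_general
    {X Y : Type*} [NormedAddCommGroup X] [InnerProductSpace ℝ X] [FiniteDimensional ℝ X]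
    [NormedAddCommGroup Y] [InnerProductSpace ℝ Y] [FiniteDimensional ℝ Y]
    (Φ : X →ₗ[ℝ] Y) (domf : Set Y) (f : Y → ℝ) (domg : Set X) (g : X → ℝ)
    -- f is proper l.s.c. convex (closed epigraph, nonempty domain)
    (hf_conv : ConvexOn ℝ domf f)
    -- f is twice continuously differentiable on int (dom f)
    (hf_C2 : ContDiffOn ℝ 2 f (interior domf))
    -- the Hessian of f is positive definite on int (dom f)
    (hf_posdef : ∀ y ∈ interior domf, ∀ w : Y, w ≠ 0 →
      0 < (inner ℝ ((fderiv ℝ (gradient f) y) w) w : ℝ))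
    -- g is proper l.s.c. convex
    (hg_conv : ConvexOn ℝ domg g)
    -- x̄ ∈ Φ⁻¹(int dom f) ∩ dom g is an optimal solution
    (xb : X) (hxb : xb ∈ Φ ⁻¹' (interior domf) ∩ domg)
    (hopt : ∀ x, Φ x ∈ domf → x ∈ domg → f (Φ xb) + g xb ≤ f (Φ x) + g x)
    -- ȳ := −Φ*∇f(Φx̄), and ȳ ∈ ∂g(x̄)
    (yb : X) (hyb : yb = - (LinearMap.adjoint Φ) (gradient f (Φ xb)))
    (hyb_sub : yb ∈ subdiffD domg g xb) :
    (∀ x, x ≠ xb → Φ x ∈ domf → x ∈ domg → f (Φ xb) + g xb < f (Φ x) + g x) ↔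
      (LinearMap.ker Φ : Set X) ∩ radialCone {x | yb ∈ subdiffD domg g x} xb = {0} := by
  have horth : ∀ z, Φ z = Φ xb → inner ℝ yb (z - xb) = 0 := fun z hz => by
    rw [hyb, inner_neg_left, LinearMap.adjoint_inner_left, map_sub, hz, sub_self,
      inner_zero_right, neg_zero]
  have hmin : IsMinOn (f ∘ Φ + g) (Φ ⁻¹' domf ∩ domg) xb := fun x hx => hopt x hx.1 hx.2
  rw [inter_radialCone_eq_singleton_zero_iff (LinearMap.ker Φ)
    (Ω := {x | yb ∈ subdiffD domg g x}) hyb_sub]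
  simp only [mem_ofPred_eq, LinearMap.mem_ker, map_sub, sub_eq_zero]
  constructor
  · intro huniq z hz hΦz
    by_contra hne
    obtain ⟨hzg, hgz⟩ := (mem_subdiffD_iff_of_mem hyb_sub).1 hz
    have hlt := huniq z hne (hΦz ▸ interior_subset hxb.1) hzg
    rw [hΦz] at hlt
    linarith [horth z hΦz]
  · intro huniq x hne hxf hxg
    refine (hopt x hxf hxg).lt_of_ne fun hval => hne ?_
    have hΦx := map_eq_of_isMinOn_comp_add Φ hf_conv hf_C2 hf_posdef hg_conv hxb hmin
      ⟨hxf, hxg⟩ hval.ge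
    rw [hΦx] at hval
    exact huniq x ((mem_subdiffD_iff_of_mem hyb_sub).2 ⟨hxg, by linarith [horth x hΦx]⟩) hΦx

/-- **Theorem (Solution uniqueness via the radial cone).**
Let `f` be a proper l.s.c. convex function (encoded by `domf` and its real values `f`),
twice continuously differentiable on `int (dom f)` with positive definite Hessian there,
`g` a proper l.s.c. convex function (encoded by `domg`, `g`), and
`x̄ ∈ Φ⁻¹(int (dom f)) ∩ dom g` an optimal solution of `min f(Φx) + g(x)`, with
`ȳ = −Φ*∇f(Φx̄) ∈ ∂g(x̄)`.  Then `x̄` is the unique optimal solution if and only if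
`Ker Φ ∩ R_{∂g*(ȳ)}(x̄) = {0}`. -/
theorem solution_uniqueness_via_radial_cone
    {X Y : Type*} [NormedAddCommGroup X] [InnerProductSpace ℝ X] [FiniteDimensional ℝ X]
    [NormedAddCommGroup Y] [InnerProductSpace ℝ Y] [FiniteDimensional ℝ Y]
    (Φ : X →ₗ[ℝ] Y) (domf : Set Y) (f : Y → ℝ) (domg : Set X) (g : X → ℝ)
    -- f is proper l.s.c. convex (closed epigraph, nonempty domain)
    (hf_conv : ConvexOn ℝ domf f)
    (hf_proper : domf.Nonempty)
    (hf_lsc : IsClosed {p : Y × ℝ | p.1 ∈ domf ∧ f p.1 ≤ p.2})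
    -- f is twice continuously differentiable on int (dom f)
    (hf_C2 : ContDiffOn ℝ 2 f (interior domf))
    -- the Hessian of f is positive definite on int (dom f)
    (hf_posdef : ∀ y ∈ interior domf, ∀ w : Y, w ≠ 0 →
      0 < (inner ℝ ((fderiv ℝ (gradient f) y) w) w : ℝ))
    -- g is proper l.s.c. convex
    (hg_conv : ConvexOn ℝ domg g)
    (hg_proper : domg.Nonempty)
    (hg_lsc : IsClosed {p : X × ℝ | p.1 ∈ domg ∧ g p.1 ≤ p.2})
    -- standing assumption Φ⁻¹(int dom f) ∩ dom g ≠ ∅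
    (hfeas : (Φ ⁻¹' (interior domf) ∩ domg).Nonempty)
    -- x̄ ∈ Φ⁻¹(int dom f) ∩ dom g is an optimal solution
    (xb : X) (hxb : xb ∈ Φ ⁻¹' (interior domf) ∩ domg)
    (hopt : ∀ x, Φ x ∈ domf → x ∈ domg → f (Φ xb) + g xb ≤ f (Φ x) + g x)
    -- ȳ := −Φ*∇f(Φx̄), and ȳ ∈ ∂g(x̄)
    (yb : X) (hyb : yb = - (LinearMap.adjoint Φ) (gradient f (Φ xb)))
    (hyb_sub : yb ∈ subdiffD domg g xb) :
    (∀ x, x ≠ xb → Φ x ∈ domf → x ∈ domg → f (Φ xb) + g xb < f (Φ x) + g x) ↔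
      (LinearMap.ker Φ : Set X) ∩ radialCone {x | yb ∈ subdiffD domg g x} xb = {0} :=
  solution_uniqueness_via_radial_cone_general Φ domf f domg g hf_conv hf_C2 hf_posdef hg_conv xb hxb
    hopt yb hyb hyb_sub
end

section
/- Let x̄ ∈ Φ⁻¹(int(dom f)) ∩ dom g be an optimal solution of the problem min_{x∈X} f(Φx) + g(x), set ȳ := −Φ*∇f(Φx̄), and suppose that g satisfies the quadratic growth condition at x̄ for ȳ and that the radial cone R_{∂g*(ȳ)}(x̄) is closed. Then x̄ is a strong solution of the problem if and only if it is the unique optimal solution. -/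
/-!
Strong ⇒ unique: `φ = f ∘ Φ + g` is convex, and a strict local minimizer of a convex function is
a strict global one.

Unique ⇒ strong: near `Φ x̄` the positive definite Hessian makes `f` locally strongly convex, and
adding the quadratic growth of `g` (the linear terms cancel since `ȳ ∈ ∂g(x̄)` by first-order
optimality) gives `φ x - φ x̄ ≥ c ‖Φ (x - x̄)‖² + κ/2 dist(x, ∂g*(ȳ))²`. A nonzero direction in
`ker Φ ∩ R_{∂g*(ȳ)}(x̄)` would produce a second minimizer, since `g` is affine with slope `ȳ` on
`∂g*(ȳ)`. As this cone is closed, compactness of the unit sphere upgrades the trivial intersection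
to `γ ‖d‖ ≤ ‖Φ d‖ + dist(d, R_{∂g*(ȳ)}(x̄))`, and the growth of `φ` becomes quadratic in `‖x - x̄‖`.
-/

open Filter Set

open Topology

theorem tendsto_add_smul_nhdsGT {E : Type*} [AddCommGroup E] [TopologicalSpace E]
    [IsTopologicalAddGroup E] [Module ℝ E] [ContinuousSMul ℝ E] (x v : E) :
    Tendsto (fun t : ℝ => x + t • v) (𝓝[>] 0) (𝓝 x) := by
  have : Continuous (fun t : ℝ => x + t • v) := by fun_prop
  simpa using (this.tendsto 0).mono_left nhdsWithin_le_nhds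

theorem ConvexOn.le_add_smul_sub {E : Type*} [AddCommGroup E] [Module ℝ E] {s : Set E}
    {φ : E → ℝ} (hφ : ConvexOn ℝ s φ) {x y : E} (hx : x ∈ s) (hy : y ∈ s) {t : ℝ}
    (ht : t ∈ Icc (0:ℝ) 1) : φ (x + t • (y - x)) ≤ φ x + t * (φ y - φ x) := by
  have h := hφ.2 hx hy (sub_nonneg.2 ht.2) ht.1 (sub_add_cancel 1 t)
  have hxy : x + t • (y - x) = (1 - t) • x + t • y := by module
  rw [hxy]
  simp only [smul_eq_mul] at h
  linarith

theorem ConvexOn.comp_linearMap_add {E F : Type*} [AddCommGroup E] [Module ℝ E] [AddCommGroup F]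
    [Module ℝ F] {s : Set F} {t : Set E} {f : F → ℝ} {g : E → ℝ} (hf : ConvexOn ℝ s f)
    (hg : ConvexOn ℝ t g) (A : E →ₗ[ℝ] F) :
    ConvexOn ℝ (A ⁻¹' s ∩ t) (fun x => f (A x) + g x) :=
  have hD : Convex ℝ (A ⁻¹' s ∩ t) := (hf.1.linear_preimage A).inter hg.1
  ((hf.comp_linearMap A).subset inter_subset_left hD).add (hg.subset inter_subset_right hD)

theorem ConvexOn.lt_of_eventually_lt {E : Type*} [AddCommGroup E] [TopologicalSpace E]
    [IsTopologicalAddGroup E] [Module ℝ E] [ContinuousSMul ℝ E] {s : Set E} {φ : E → ℝ}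
    (hφ : ConvexOn ℝ s φ) {x₀ x : E} (hx₀ : x₀ ∈ s)
    (hloc : ∀ᶠ y in 𝓝 x₀, y ∈ s → y ≠ x₀ → φ x₀ < φ y) (hx : x ∈ s) (hne : x ≠ x₀) :
    φ x₀ < φ x := by
  obtain ⟨t, hlt, ht⟩ := (((tendsto_add_smul_nhdsGT x₀ (x - x₀)).eventually hloc).and
    (Ioo_mem_nhdsGT zero_lt_one)).exists
  have hmem : x₀ + t • (x - x₀) ∈ s := hφ.1.add_smul_sub_mem hx₀ hx ⟨ht.1.le, ht.2.le⟩
  have hne' : x₀ + t • (x - x₀) ≠ x₀ := by simpa [sub_eq_zero, ht.1.ne'] using hne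
  have hle := hφ.le_add_smul_sub hx₀ hx ⟨ht.1.le, ht.2.le⟩
  nlinarith [hlt hmem hne', ht.1]

theorem HasFDerivAt.le_apply_of_eventually_mul_le {E : Type*} [NormedAddCommGroup E]
    [NormedSpace ℝ E] {f : E → ℝ} {f' : E →L[ℝ] ℝ} {x v : E} {a : ℝ} (hf : HasFDerivAt f f' x)
    (h : ∀ᶠ t in 𝓝[>] (0:ℝ), t * a ≤ f (x + t • v) - f x) : a ≤ f' v := by
  have hline : HasDerivAt (fun t : ℝ => f (x + t • v)) (f' v) 0 := by
    have hseg : HasDerivAt (fun t : ℝ => x + t • v) v 0 := by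
      simpa using ((hasDerivAt_id (0:ℝ)).smul_const v).const_add x
    exact (by simpa using hf : HasFDerivAt f f' (x + (0:ℝ) • v)).comp_hasDerivAt 0 hseg
  refine ge_of_tendsto (by simpa using hline.tendsto_slope_zero_right) ?_
  filter_upwards [h, self_mem_nhdsWithin] with t ht htpos
  rw [le_inv_mul_iff₀ htpos]
  linarith

theorem add_deriv_add_half_le_of_le_deriv2 {φ φ' φ'' : ℝ → ℝ} {k : ℝ}
    (hφ : ∀ t ∈ Icc (0:ℝ) 1, HasDerivAt φ (φ' t) t)
    (hφ' : ∀ t ∈ Icc (0:ℝ) 1, HasDerivAt φ' (φ'' t) t)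
    (hk : ∀ t ∈ Icc (0:ℝ) 1, k ≤ φ'' t) :
    φ 0 + φ' 0 + k / 2 ≤ φ 1 := by
  have hI : interior (Icc (0:ℝ) 1) ⊆ Icc 0 1 := interior_subset
  have hq' : ∀ t ∈ Icc (0:ℝ) 1, HasDerivAt (fun t => φ' t - k * t) (φ'' t - k) t := fun t ht =>
    ((hφ' t ht).sub ((hasDerivAt_id' t).const_mul k)).congr_deriv (by ring)
  have hq : MonotoneOn (fun t => φ' t - k * t) (Icc 0 1) :=
    monotoneOn_of_hasDerivWithinAt_nonneg (convex_Icc 0 1)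
      (fun t ht => (hq' t ht).continuousAt.continuousWithinAt)
      (fun t ht => (hq' t (hI ht)).hasDerivWithinAt) fun t ht => sub_nonneg.2 (hk t (hI ht))
  have hp' : ∀ t ∈ Icc (0:ℝ) 1, HasDerivAt (fun t => φ t - φ' 0 * t - k / 2 * t ^ 2)
      (φ' t - k * t - φ' 0) t := fun t ht =>
    (((hφ t ht).sub ((hasDerivAt_id' t).const_mul (φ' 0))).sub
      ((hasDerivAt_pow 2 t).const_mul (k / 2))).congr_deriv (by norm_num; ring)
  have hp : MonotoneOn (fun t => φ t - φ' 0 * t - k / 2 * t ^ 2) (Icc 0 1) := by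
    refine monotoneOn_of_hasDerivWithinAt_nonneg (convex_Icc 0 1)
      (fun t ht => (hp' t ht).continuousAt.continuousWithinAt)
      (fun t ht => (hp' t (hI ht)).hasDerivWithinAt) fun t ht => ?_
    have := hq (left_mem_Icc.2 zero_le_one) (hI ht) (interior_Icc (a := (0:ℝ)) (b := 1) ▸ ht).1.le
    linarith
  linarith [hp (left_mem_Icc.2 zero_le_one) (right_mem_Icc.2 zero_le_one) zero_le_one]

theorem exists_pos_mul_sq_le_inner_of_isCompact {Y : Type*} [NormedAddCommGroup Y]
    [InnerProductSpace ℝ Y] [FiniteDimensional ℝ Y] {K : Set Y} (hK : IsCompact K)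
    {A : Y → Y →L[ℝ] Y} (hA : ContinuousOn A K)
    (hpos : ∀ y ∈ K, ∀ w : Y, w ≠ 0 → 0 < inner ℝ (A y w) w) :
    ∃ m > 0, ∀ y ∈ K, ∀ w : Y, m * ‖w‖ ^ 2 ≤ inner ℝ (A y w) w := by
  have hcont : ContinuousOn (fun p : Y × Y => inner ℝ (A p.1 p.2) p.2)
      (K ×ˢ Metric.sphere 0 1) :=
    ((hA.comp continuousOn_fst fun p hp => hp.1).clm_apply continuousOn_snd).inner continuousOn_snd
  obtain ⟨m, hm, hmK⟩ := (hK.prod (isCompact_sphere 0 1)).exists_forall_le' hcont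
    fun p hp => hpos p.1 hp.1 p.2 (ne_zero_of_mem_unit_sphere ⟨p.2, hp.2⟩)
  refine ⟨m, hm, fun y hy w => ?_⟩
  rcases eq_or_ne w 0 with rfl | hw
  · simp
  have hw' : 0 < ‖w‖ := norm_pos_iff.mpr hw
  have hu := hmK (y, ‖w‖⁻¹ • w) ⟨hy, by simp [norm_smul, hw'.ne']⟩
  simp only [map_smul, inner_smul_left, inner_smul_right, RCLike.conj_to_real] at hu
  calc m * ‖w‖ ^ 2 ≤ ‖w‖⁻¹ * (‖w‖⁻¹ * inner ℝ (A y w) w) * ‖w‖ ^ 2 := by gcongr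
    _ = inner ℝ (A y w) w := by field_simp

theorem add_fderiv_add_half_le_of_le_inner_hessian {Y : Type*} [NormedAddCommGroup Y]
    [InnerProductSpace ℝ Y] [CompleteSpace Y] {O : Set Y} (hO : IsOpen O) {f : Y → ℝ}
    (hf : DifferentiableOn ℝ f O) (hgrad : DifferentiableOn ℝ (gradient f) O) {y u : Y}
    (hseg : segment ℝ y (y + u) ⊆ O) {m : ℝ}
    (hm : ∀ z ∈ segment ℝ y (y + u), m * ‖u‖ ^ 2 ≤ inner ℝ (fderiv ℝ (gradient f) z u) u) :
    f y + fderiv ℝ f y u + m / 2 * ‖u‖ ^ 2 ≤ f (y + u) := by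
  have hmem : ∀ t ∈ Icc (0:ℝ) 1, y + t • u ∈ segment ℝ y (y + u) := fun t ht => by
    simpa [segment_eq_image', add_sub_cancel_left] using ⟨t, ht, rfl⟩
  have hline : ∀ t : ℝ, HasDerivAt (fun s : ℝ => y + s • u) u t := fun t => by
    simpa using ((hasDerivAt_id t).smul_const u).const_add y
  have hnhds : ∀ t ∈ Icc (0:ℝ) 1, O ∈ 𝓝 (y + t • u) := fun t ht =>
    hO.mem_nhds (hseg (hmem t ht))
  have key := add_deriv_add_half_le_of_le_deriv2 (φ := fun t => f (y + t • u))
    (φ' := fun t => inner ℝ (gradient f (y + t • u)) u)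
    (φ'' := fun t => inner ℝ (fderiv ℝ (gradient f) (y + t • u) u) u) (k := m * ‖u‖ ^ 2)
    (fun t ht => by
      have := (hf.differentiableAt (hnhds t ht)).hasFDerivAt.comp_hasDerivAt t (hline t)
      rw [← inner_gradient_left] at this
      exact this)
    (fun t ht => by
      have := ((hgrad.differentiableAt (hnhds t ht)).hasFDerivAt.comp_hasDerivAt t
        (hline t)).inner ℝ (hasDerivAt_const t u)
      simp only [inner_zero_right, zero_add] at this
      exact this)
    (fun t ht => hm _ (hmem t ht))
  simp only [zero_smul, add_zero, one_smul, inner_gradient_left] at key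
  linarith

theorem exists_pos_add_fderiv_add_mul_sq_le {Y : Type*} [NormedAddCommGroup Y]
    [InnerProductSpace ℝ Y] [FiniteDimensional ℝ Y] {O : Set Y} (hO : IsOpen O) {f : Y → ℝ}
    (hf : ContDiffOn ℝ 2 f O)
    (hpos : ∀ y ∈ O, ∀ w : Y, w ≠ 0 → 0 < inner ℝ (fderiv ℝ (gradient f) y w) w)
    {y₀ : Y} (hy₀ : y₀ ∈ O) :
    ∃ c > 0, ∀ᶠ y in 𝓝 y₀, f y₀ + fderiv ℝ f y₀ (y - y₀) + c * ‖y - y₀‖ ^ 2 ≤ f y := by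
  obtain ⟨r, hr, hball⟩ := Metric.nhds_basis_closedBall.mem_iff.mp (hO.mem_nhds hy₀)
  have hgrad : ContDiffOn ℝ 1 (gradient f) O := by
    have : gradient f = (InnerProductSpace.toDual ℝ Y).symm ∘ fderiv ℝ f := rfl
    rw [this]
    exact (InnerProductSpace.toDual ℝ Y).symm.contDiff.comp_contDiffOn
      (hf.fderiv_of_isOpen hO (by norm_num))
  obtain ⟨m, hm, hmK⟩ := exists_pos_mul_sq_le_inner_of_isCompact (isCompact_closedBall y₀ r)
    ((hgrad.continuousOn_fderiv_of_isOpen hO le_rfl).mono hball)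
    fun y hy => hpos y (hball hy)
  refine ⟨m / 2, by positivity, ?_⟩
  filter_upwards [Metric.closedBall_mem_nhds y₀ hr] with y hy
  have hseg : segment ℝ y₀ (y₀ + (y - y₀)) ⊆ Metric.closedBall y₀ r := by
    rw [add_sub_cancel]
    exact (convex_closedBall y₀ r).segment_subset (Metric.mem_closedBall_self hr.le) hy
  simpa using add_fderiv_add_half_le_of_le_inner_hessian hO (hf.differentiableOn (by norm_num))
    (hgrad.differentiableOn one_ne_zero) (hseg.trans hball) fun z hz => hmK z (hseg hz) _

theorem exists_pos_mul_norm_le_norm_add_infDist {E F : Type*} [NormedAddCommGroup E]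
    [NormedSpace ℝ E] [FiniteDimensional ℝ E] [NormedAddCommGroup F] [NormedSpace ℝ F]
    (A : E →ₗ[ℝ] F) {C : Set E} (hne : C.Nonempty) (hC : IsClosed C)
    (hsmul : ∀ t : ℝ, 0 < t → ∀ w ∈ C, t • w ∈ C) (hker : ∀ w ∈ C, A w = 0 → w = 0) :
    ∃ γ > 0, ∀ d : E, γ * ‖d‖ ≤ ‖A d‖ + Metric.infDist d C := by
  have hcont : ContinuousOn (fun u => ‖A u‖ + Metric.infDist u C) (Metric.sphere 0 1) :=
    (A.continuous_of_finiteDimensional.norm.add (Metric.continuous_infDist_pt C)).continuousOn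
  obtain ⟨γ, hγ, hγS⟩ := (isCompact_sphere (0:E) 1).exists_forall_le' hcont (a := 0)
    fun u hu => by
      by_contra! h
      have hdist : Metric.infDist u C = 0 :=
        le_antisymm (by linarith [norm_nonneg (A u)]) Metric.infDist_nonneg
      have hAu : A u = 0 := norm_eq_zero.1 (le_antisymm (by linarith) (norm_nonneg _))
      have hu0 := hker u ((hC.mem_iff_infDist_zero hne).2 hdist) hAu
      simp [hu0] at hu
  refine ⟨γ, hγ, fun d => ?_⟩
  rcases eq_or_ne d 0 with rfl | hd
  · simpa using Metric.infDist_nonneg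
  have hd' : 0 < ‖d‖ := norm_pos_iff.2 hd
  have hu := hγS (‖d‖⁻¹ • d) (by simp [norm_smul, hd'.ne'])
  have hscale : ‖d‖ * Metric.infDist (‖d‖⁻¹ • d) C ≤ Metric.infDist d C := by
    have h := infDist_smul₀ hd'.ne' C (‖d‖⁻¹ • d)
    rw [smul_inv_smul₀ hd'.ne', Real.norm_of_nonneg hd'.le] at h
    rw [← h]
    exact Metric.infDist_le_infDist_of_subset (fun w hw => ⟨‖d‖⁻¹ • w,
      hsmul _ (inv_pos.2 hd') w hw, smul_inv_smul₀ hd'.ne' w⟩) hne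
  have hAd : ‖d‖ * ‖A (‖d‖⁻¹ • d)‖ = ‖A d‖ := by
    rw [map_smul, norm_smul, Real.norm_of_nonneg (inv_nonneg.2 hd'.le), mul_inv_cancel_left₀ hd'.ne']
  nlinarith

theorem sub_mem_radialCone {M : Type*} [AddCommGroup M] [Module ℝ M] {Ω : Set M} {x z : M}
    (hz : z ∈ Ω) : z - x ∈ radialCone Ω x :=
  ⟨1, zero_le_one, z, hz, (one_smul ℝ _).symm⟩

theorem smul_mem_radialCone {M : Type*} [AddCommGroup M] [Module ℝ M] {Ω : Set M} {x w : M}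
    {t : ℝ} (ht : 0 ≤ t) (hw : w ∈ radialCone Ω x) : t • w ∈ radialCone Ω x := by
  obtain ⟨s, hs, z, hz, rfl⟩ := hw
  exact ⟨t * s, mul_nonneg ht hs, z, hz, (mul_smul t s _).symm⟩

theorem infDist_sub_radialCone_le {E : Type*} [NormedAddCommGroup E] [Module ℝ E] (Ω : Set E)
    (x y : E) : Metric.infDist (y - x) (radialCone Ω x) ≤ Metric.infDist y Ω := by
  rcases Ω.eq_empty_or_nonempty with rfl | hΩ
  · simp [radialCone]
  calc Metric.infDist (y - x) (radialCone Ω x)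
      ≤ Metric.infDist (y - x) ((· - x) '' Ω) :=
        Metric.infDist_le_infDist_of_subset (image_subset_iff.2 fun _ => sub_mem_radialCone)
          (hΩ.image _)
    _ = Metric.infDist y Ω := Metric.infDist_image (IsometryEquiv.subRight x).isometry

theorem sub_eq_inner_of_mem_subdiffD {X : Type*} [NormedAddCommGroup X] [InnerProductSpace ℝ X]
    {domg : Set X} {g : X → ℝ} {v x z : X} (hx : v ∈ subdiffD domg g x)
    (hz : v ∈ subdiffD domg g z) : g z - g x = inner ℝ v (z - x) := by
  have h₁ := hx.2 z hz.1
  have h₂ := hz.2 x hx.1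
  rw [← neg_sub, inner_neg_right] at h₂
  linarith

theorem min_mul_sq_mul_sq_le {c k γ n a b : ℝ} (hc : 0 ≤ c) (hk : 0 ≤ k) (hγn : 0 ≤ γ * n)
    (hab : γ * n ≤ a + b) : min c k * γ ^ 2 / 2 * n ^ 2 ≤ c * a ^ 2 + k * b ^ 2 := by
  have hmin : min c k * (a ^ 2 + b ^ 2) ≤ c * a ^ 2 + k * b ^ 2 := by
    nlinarith [min_le_left c k, min_le_right c k, sq_nonneg a, sq_nonneg b]
  have hsq : (γ * n) ^ 2 ≤ 2 * (a ^ 2 + b ^ 2) := by nlinarith [sq_nonneg (a - b)]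
  calc min c k * γ ^ 2 / 2 * n ^ 2 = min c k * ((γ * n) ^ 2 / 2) := by ring
    _ ≤ min c k * (a ^ 2 + b ^ 2) := by have := le_min hc hk; gcongr; linarith
    _ ≤ c * a ^ 2 + k * b ^ 2 := hmin

section Composite

variable {X Y : Type*} [NormedAddCommGroup X] [InnerProductSpace ℝ X] [FiniteDimensional ℝ X]
  [NormedAddCommGroup Y] [InnerProductSpace ℝ Y] [FiniteDimensional ℝ Y]
  {Φ : X →ₗ[ℝ] Y} {domf : Set Y} {f : Y → ℝ} {domg : Set X} {g : X → ℝ} {xb yb : X}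

theorem inner_neg_adjoint_gradient (y : Y) (d : X) :
    inner ℝ (-LinearMap.adjoint Φ (gradient f y)) d = -fderiv ℝ f y (Φ d) := by
  rw [inner_neg_left, LinearMap.adjoint_inner_left, inner_gradient_left]

theorem neg_adjoint_gradient_mem_subdiffD (hg : ConvexOn ℝ domg g)
    (hf : DifferentiableAt ℝ f (Φ xb)) (hΦxb : Φ xb ∈ interior domf) (hxb : xb ∈ domg)
    (hopt : ∀ x, Φ x ∈ domf → x ∈ domg → f (Φ xb) + g xb ≤ f (Φ x) + g x) :
    -LinearMap.adjoint Φ (gradient f (Φ xb)) ∈ subdiffD domg g xb := by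
  refine ⟨hxb, fun z hz => ?_⟩
  rw [inner_neg_adjoint_gradient, neg_le]
  refine hf.hasFDerivAt.le_apply_of_eventually_mul_le ?_
  filter_upwards [(tendsto_add_smul_nhdsGT (Φ xb) (Φ (z - xb))).eventually
    (isOpen_interior.mem_nhds hΦxb), Ioc_mem_nhdsGT zero_lt_one] with t hft ht
  have hΦxt : Φ (xb + t • (z - xb)) = Φ xb + t • Φ (z - xb) := by rw [map_add, map_smul]
  have hmin := hopt _ (hΦxt ▸ interior_subset hft)
    (hg.1.add_smul_sub_mem hxb hz ⟨ht.1.le, ht.2⟩)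
  have hconv := hg.le_add_smul_sub hxb hz ⟨ht.1.le, ht.2⟩
  rw [hΦxt] at hmin
  linarith

theorem eq_zero_of_mem_radialCone_of_map_eq_zero
    (hyb : yb = -LinearMap.adjoint Φ (gradient f (Φ xb))) (hΦxb : Φ xb ∈ domf)
    (hxbS : yb ∈ subdiffD domg g xb)
    (huniq : ∀ x, x ≠ xb → Φ x ∈ domf → x ∈ domg → f (Φ xb) + g xb < f (Φ x) + g x)
    {w : X} (hw : w ∈ radialCone {z | yb ∈ subdiffD domg g z} xb) (hΦw : Φ w = 0) :
    w = 0 := by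
  obtain ⟨t, -, z, hz, rfl⟩ := hw
  by_contra hne
  have ht : t ≠ 0 := by rintro rfl; simp at hne
  have hzxb : z ≠ xb := by rintro rfl; simp at hne
  have hΦz : Φ (z - xb) = 0 := by
    rw [map_smul] at hΦw
    exact (smul_eq_zero.1 hΦw).resolve_left ht
  have hgz := sub_eq_inner_of_mem_subdiffD hxbS hz
  rw [hyb, inner_neg_adjoint_gradient, hΦz, map_zero, neg_zero] at hgz
  have hΦz' : Φ z = Φ xb := by rwa [map_sub, sub_eq_zero] at hΦz
  have hlt := huniq z hzxb (hΦz' ▸ hΦxb) hz.1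
  rw [hΦz'] at hlt
  linarith

theorem exists_strong_growth_of_unique
    (hyb : yb = -LinearMap.adjoint Φ (gradient f (Φ xb))) (hf_C2 : ContDiffOn ℝ 2 f (interior domf))
    (hf_posdef : ∀ y ∈ interior domf, ∀ w : Y, w ≠ 0 →
      0 < (inner ℝ ((fderiv ℝ (gradient f) y) w) w : ℝ))
    (hΦxb : Φ xb ∈ interior domf) (hxbS : yb ∈ subdiffD domg g xb)
    (hQG : ∃ ε > (0:ℝ), ∃ κ > (0:ℝ), ∀ x ∈ domg, ‖x - xb‖ < ε →
      κ / 2 * (Metric.infDist x {z | yb ∈ subdiffD domg g z}) ^ 2 ≤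
        g x - g xb - (inner ℝ yb (x - xb) : ℝ))
    (hclosed : IsClosed (radialCone {x | yb ∈ subdiffD domg g x} xb))
    (huniq : ∀ x, x ≠ xb → Φ x ∈ domf → x ∈ domg → f (Φ xb) + g xb < f (Φ x) + g x) :
    ∃ ε > (0:ℝ), ∃ κ > (0:ℝ), ∀ x, Φ x ∈ domf → x ∈ domg → ‖x - xb‖ < ε →
      κ / 2 * ‖x - xb‖ ^ 2 ≤ f (Φ x) + g x - (f (Φ xb) + g xb) := by
  set S := {z | yb ∈ subdiffD domg g z}
  obtain ⟨ε, hε, κ, hκ, hgQG⟩ := hQG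
  obtain ⟨c, hc, hfloc⟩ := exists_pos_add_fderiv_add_mul_sq_le isOpen_interior hf_C2 hf_posdef hΦxb
  obtain ⟨δ, hδ, hfδ⟩ := Metric.eventually_nhds_iff.1
    ((Φ.continuous_of_finiteDimensional.tendsto xb).eventually hfloc)
  obtain ⟨γ, hγ, hcone⟩ := exists_pos_mul_norm_le_norm_add_infDist Φ
    ⟨_, sub_mem_radialCone (x := xb) (show xb ∈ S from hxbS)⟩ hclosed
    (fun t ht w hw => smul_mem_radialCone ht.le hw)
    (fun w hw hΦw => eq_zero_of_mem_radialCone_of_map_eq_zero hyb (interior_subset hΦxb) hxbS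
      huniq hw hΦw)
  refine ⟨min ε δ, lt_min hε hδ, min c (κ / 2) * γ ^ 2, by positivity,
    fun x hxf hxg hx => ?_⟩
  have hfx := hfδ (show dist x xb < δ by rw [dist_eq_norm]; exact hx.trans_le (min_le_right _ _))
  have hgx := hgQG x hxg (hx.trans_le (min_le_left _ _))
  have hlin : fderiv ℝ f (Φ xb) (Φ x - Φ xb) = -inner ℝ yb (x - xb) := by
    rw [hyb, inner_neg_adjoint_gradient, neg_neg, map_sub Φ]
  rw [hlin, ← map_sub] at hfx
  have hgrowth : c * ‖Φ (x - xb)‖ ^ 2 + κ / 2 * Metric.infDist x S ^ 2 ≤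
      f (Φ x) + g x - (f (Φ xb) + g xb) := by linarith
  refine (min_mul_sq_mul_sq_le hc.le (by positivity) (by positivity) ?_).trans hgrowth
  exact (hcone _).trans (by gcongr; exact infDist_sub_radialCone_le S xb x)

end Composite

theorem strong_minima_iff_unique_solution_general
    {X Y : Type*} [NormedAddCommGroup X] [InnerProductSpace ℝ X] [FiniteDimensional ℝ X]
    [NormedAddCommGroup Y] [InnerProductSpace ℝ Y] [FiniteDimensional ℝ Y]
    (Φ : X →ₗ[ℝ] Y) (domf : Set Y) (f : Y → ℝ) (domg : Set X) (g : X → ℝ)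
    -- f is proper l.s.c. convex
    (hf_conv : ConvexOn ℝ domf f)
    -- f is twice continuously differentiable on int (dom f)
    (hf_C2 : ContDiffOn ℝ 2 f (interior domf))
    -- the Hessian of f is positive definite on int (dom f)
    (hf_posdef : ∀ y ∈ interior domf, ∀ w : Y, w ≠ 0 →
      0 < (inner ℝ ((fderiv ℝ (gradient f) y) w) w : ℝ))
    -- g is proper l.s.c. convex
    (hg_conv : ConvexOn ℝ domg g)
    -- x̄ ∈ Φ⁻¹(int dom f) ∩ dom g is an optimal solution
    (xb : X) (hxb : xb ∈ Φ ⁻¹' (interior domf) ∩ domg)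
    (hopt : ∀ x, Φ x ∈ domf → x ∈ domg → f (Φ xb) + g xb ≤ f (Φ x) + g x)
    -- ȳ := −Φ*∇f(Φx̄)
    (yb : X) (hyb : yb = - (LinearMap.adjoint Φ) (gradient f (Φ xb)))
    -- g satisfies the quadratic growth condition at x̄ for ȳ
    (hQG : ∃ ε > (0:ℝ), ∃ κ > (0:ℝ), ∀ x ∈ domg, ‖x - xb‖ < ε →
      κ / 2 * (Metric.infDist x {z | yb ∈ subdiffD domg g z}) ^ 2 ≤
        g x - g xb - (inner ℝ yb (x - xb) : ℝ))
    -- the radial cone R_{∂g*(ȳ)}(x̄) is closed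
    (hclosed : IsClosed (radialCone {x | yb ∈ subdiffD domg g x} xb)) :
    -- x̄ is a strong solution ↔ x̄ is the unique optimal solution
    (∃ ε > (0:ℝ), ∃ κ > (0:ℝ), ∀ x, Φ x ∈ domf → x ∈ domg → ‖x - xb‖ < ε →
        κ / 2 * ‖x - xb‖ ^ 2 ≤ f (Φ x) + g x - (f (Φ xb) + g xb)) ↔
      (∀ x, x ≠ xb → Φ x ∈ domf → x ∈ domg → f (Φ xb) + g xb < f (Φ x) + g x) := by
  have hfd : DifferentiableAt ℝ f (Φ xb) :=
    (hf_C2.differentiableOn two_ne_zero _ hxb.1).differentiableAt (isOpen_interior.mem_nhds hxb.1)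
  have hxbS : yb ∈ subdiffD domg g xb :=
    hyb ▸ neg_adjoint_gradient_mem_subdiffD hg_conv hfd hxb.1 hxb.2 hopt
  constructor
  · rintro ⟨ε, hε, κ, hκ, hstrong⟩ x hne hxf hxg
    refine (hf_conv.comp_linearMap_add hg_conv Φ).lt_of_eventually_lt
      ⟨interior_subset (s := domf) hxb.1, hxb.2⟩ ?_ ⟨hxf, hxg⟩ hne
    filter_upwards [Metric.ball_mem_nhds xb hε] with x' hx' hx'D hne'
    have hpos : 0 < κ / 2 * ‖x' - xb‖ ^ 2 := by
      have := norm_pos_iff.2 (sub_ne_zero.2 hne')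
      positivity
    linarith [hstrong x' hx'D.1 hx'D.2 (mem_ball_iff_norm.1 hx')]
  · exact exists_strong_growth_of_unique hyb hf_C2 hf_posdef hxb.1 hxbS hQG hclosed

/-- **Corollary (Strong minima and solution uniqueness).**
In the setting of the composite problem `min f(Φx) + g(x)`, if `g` satisfies the quadratic
growth condition at the optimal solution `x̄` for `ȳ = −Φ*∇f(Φx̄)`, and the radial cone
`R_{∂g*(ȳ)}(x̄)` is closed, then `x̄` is a strong solution if and only if it is the unique
optimal solution. -/
theorem strong_minima_iff_unique_solution
    {X Y : Type*} [NormedAddCommGroup X] [InnerProductSpace ℝ X] [FiniteDimensional ℝ X]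
    [NormedAddCommGroup Y] [InnerProductSpace ℝ Y] [FiniteDimensional ℝ Y]
    (Φ : X →ₗ[ℝ] Y) (domf : Set Y) (f : Y → ℝ) (domg : Set X) (g : X → ℝ)
    -- f is proper l.s.c. convex
    (hf_conv : ConvexOn ℝ domf f)
    (hf_proper : domf.Nonempty)
    (hf_lsc : IsClosed {p : Y × ℝ | p.1 ∈ domf ∧ f p.1 ≤ p.2})
    -- f is twice continuously differentiable on int (dom f)
    (hf_C2 : ContDiffOn ℝ 2 f (interior domf))
    -- the Hessian of f is positive definite on int (dom f)
    (hf_posdef : ∀ y ∈ interior domf, ∀ w : Y, w ≠ 0 →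
      0 < (inner ℝ ((fderiv ℝ (gradient f) y) w) w : ℝ))
    -- g is proper l.s.c. convex
    (hg_conv : ConvexOn ℝ domg g)
    (hg_proper : domg.Nonempty)
    (hg_lsc : IsClosed {p : X × ℝ | p.1 ∈ domg ∧ g p.1 ≤ p.2})
    -- standing assumption Φ⁻¹(int dom f) ∩ dom g ≠ ∅
    (hfeas : (Φ ⁻¹' (interior domf) ∩ domg).Nonempty)
    -- x̄ ∈ Φ⁻¹(int dom f) ∩ dom g is an optimal solution
    (xb : X) (hxb : xb ∈ Φ ⁻¹' (interior domf) ∩ domg)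
    (hopt : ∀ x, Φ x ∈ domf → x ∈ domg → f (Φ xb) + g xb ≤ f (Φ x) + g x)
    -- ȳ := −Φ*∇f(Φx̄)
    (yb : X) (hyb : yb = - (LinearMap.adjoint Φ) (gradient f (Φ xb)))
    -- g satisfies the quadratic growth condition at x̄ for ȳ
    (hQG : ∃ ε > (0:ℝ), ∃ κ > (0:ℝ), ∀ x ∈ domg, ‖x - xb‖ < ε →
      κ / 2 * (Metric.infDist x {z | yb ∈ subdiffD domg g z}) ^ 2 ≤
        g x - g xb - (inner ℝ yb (x - xb) : ℝ))
    -- the radial cone R_{∂g*(ȳ)}(x̄) is closed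
    (hclosed : IsClosed (radialCone {x | yb ∈ subdiffD domg g x} xb)) :
    -- x̄ is a strong solution ↔ x̄ is the unique optimal solution
    (∃ ε > (0:ℝ), ∃ κ > (0:ℝ), ∀ x, Φ x ∈ domf → x ∈ domg → ‖x - xb‖ < ε →
        κ / 2 * ‖x - xb‖ ^ 2 ≤ f (Φ x) + g x - (f (Φ xb) + g xb)) ↔
      (∀ x, x ≠ xb → Φ x ∈ domf → x ∈ domg → f (Φ xb) + g xb < f (Φ x) + g x) :=
  strong_minima_iff_unique_solution_general Φ domf f domg g hf_conv hf_C2 hf_posdef hg_conv xb hxb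
    hopt yb hyb hQG hclosed
end

section
/- Fix orthogonal matrices Ū ∈ ℝ^{n1×n1}, V̄ ∈ ℝ^{n2×n2}, a linear operator Φ: ℝ^{n1×n2} → ℝ^m, and integers r ≤ p ≤ n1. Consider the problem of maximizing ½‖A‖_F² + ½‖C‖_F² over (A,B,C) ∈ S^r × ℝ^{r×(p−r)} × S₊^{p−r} subject to Φ( Ū [A BC 0; CᵀBᵀ C 0; 0 0 0] V̄ᵀ ) = 0. If (A,B,C) is feasible for this problem and (0,B,0) is a local maximizer, then A = 0 and C = 0. -/
open Matrix Filter Set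

/-- The singular values of a rectangular real matrix, in decreasing order:
the square roots of the eigenvalues of `X Xᵀ`, sorted decreasingly. -/
noncomputable def svals {a b : ℕ} (X : Matrix (Fin a) (Fin b) ℝ) : Fin a → ℝ :=
  fun i =>
    Real.sqrt ((Matrix.isHermitian_mul_conjTranspose_self X).eigenvalues
      (Tuple.sort (Matrix.isHermitian_mul_conjTranspose_self X).eigenvalues i.rev))

/-- The nuclear norm `‖X‖_* = Σᵢ σᵢ(X)`. -/
noncomputable def nuclearNorm {a b : ℕ} (X : Matrix (Fin a) (Fin b) ℝ) : ℝ :=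
  ∑ i, svals X i

/-- The spectral norm `‖X‖ = σ₁(X)`. -/
noncomputable def matSpectralNorm {a b : ℕ} (X : Matrix (Fin a) (Fin b) ℝ) : ℝ :=
  ⨆ i, svals X i

/-- The Frobenius (trace) inner product `⟨A, B⟩ = Tr(Aᵀ B)`. -/
noncomputable def finner {a b : ℕ} (A B : Matrix (Fin a) (Fin b) ℝ) : ℝ :=
  Matrix.trace (Aᵀ * B)

/-- The Frobenius norm. -/
noncomputable def frobNorm {a b : ℕ} (A : Matrix (Fin a) (Fin b) ℝ) : ℝ :=
  Real.sqrt (finner A A)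

/-- The subdifferential of the nuclear norm at `X`. -/
def nsubdiff {a b : ℕ} (X : Matrix (Fin a) (Fin b) ℝ) : Set (Matrix (Fin a) (Fin b) ℝ) :=
  {Y | ∀ Z, finner Y (Z - X) ≤ nuclearNorm Z - nuclearNorm X}

/-- `∂g*(Y) = {X : Y ∈ ∂‖X‖_*}`, the subdifferential of the conjugate of the nuclear norm. -/
def invSubdiff {a b : ℕ} (Y : Matrix (Fin a) (Fin b) ℝ) : Set (Matrix (Fin a) (Fin b) ℝ) :=
  {X | Y ∈ nsubdiff X}

/-- `O(X)`: the set of orthogonal pairs `(U, V)` such that `X = U (Diag σ(X)) Vᵀ`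
is a full ordered SVD of `X`. -/
def svdPairs {a b : ℕ} (X : Matrix (Fin a) (Fin b) ℝ) :
    Set (Matrix (Fin a) (Fin a) ℝ × Matrix (Fin b) (Fin b) ℝ) :=
  {UV | UV.1ᵀ * UV.1 = 1 ∧ UV.2ᵀ * UV.2 = 1 ∧
    X = UV.1 * (Matrix.of fun (i : Fin a) (j : Fin b) =>
      if (i : ℕ) = (j : ℕ) then svals X i else 0) * UV.2ᵀ}

/-- `p(Y) = #{i : σᵢ(Y) = 1}`. -/
noncomputable def pOne {a b : ℕ} (Y : Matrix (Fin a) (Fin b) ℝ) : ℕ :=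
  Nat.card {i : Fin a // svals Y i = 1}

/-- The `n1 × n2` block matrix `[A, D, 0; Dᵀ, C, 0; 0, 0, 0]`, where `A` occupies the
top-left `r × r` block, `D` the adjacent `r × (p − r)` block, `C` the next
`(p − r) × (p − r)` diagonal block, with zeros elsewhere. -/
def blockRect (n1 n2 r p : ℕ) (A : Matrix (Fin r) (Fin r) ℝ)
    (D : Matrix (Fin r) (Fin (p - r)) ℝ) (C : Matrix (Fin (p - r)) (Fin (p - r)) ℝ) :
    Matrix (Fin n1) (Fin n2) ℝ :=
  Matrix.of fun i j =>
    if hi : (i : ℕ) < r then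
      if hj : (j : ℕ) < r then A ⟨i, hi⟩ ⟨j, hj⟩
      else if hj2 : (j : ℕ) < p then D ⟨i, hi⟩ ⟨(j : ℕ) - r, by omega⟩
      else 0
    else if hi2 : (i : ℕ) < p then
      if hj : (j : ℕ) < r then D ⟨j, hj⟩ ⟨(i : ℕ) - r, by omega⟩
      else if hj2 : (j : ℕ) < p then C ⟨(i : ℕ) - r, by omega⟩ ⟨(j : ℕ) - r, by omega⟩
      else 0
    else 0

/-! Scaling `(A, B, C)` to `(tA, B, tC)` with `t ≥ 0` scales the block matrix
`[A BC 0; CᵀBᵀ C 0; 0 0 0]` by `t` and keeps `A` symmetric and `C` positive semidefinite, so it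
preserves feasibility. For small `t > 0` the scaled point lies in any neighbourhood of `(0, B, 0)`
and has objective value `t²(‖A‖_F² + ‖C‖_F²)/2`; local maximality of `(0, B, 0)`, whose value is
`0`, forces this to vanish. -/

open scoped Matrix.Norms.Frobenius Topology

theorem frobNorm_eq_norm {a b : ℕ} (A : Matrix (Fin a) (Fin b) ℝ) : frobNorm A = ‖A‖ := by
  rw [frobNorm, finner, frobenius_norm_def, ← Real.sqrt_eq_rpow, Finset.sum_comm]
  simp [Matrix.trace, Matrix.mul_apply, sq]

theorem blockRect_smul_mul_smul (n1 n2 r p : ℕ) (t : ℝ) (A : Matrix (Fin r) (Fin r) ℝ)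
    (B : Matrix (Fin r) (Fin (p - r)) ℝ) (C : Matrix (Fin (p - r)) (Fin (p - r)) ℝ) :
    blockRect n1 n2 r p (t • A) (B * (t • C)) (t • C) = t • blockRect n1 n2 r p A (B * C) C := by
  ext i j
  simp only [blockRect, Matrix.mul_smul, Matrix.of_apply, Matrix.smul_apply, smul_eq_mul]
  split_ifs <;> simp

theorem exists_pos_mul_lt_and_mul_lt {δ : ℝ} (hδ : 0 < δ) (x y : ℝ) :
    ∃ t > 0, t * x < δ ∧ t * y < δ := by
  have small (z : ℝ) : ∀ᶠ t in 𝓝[>] (0 : ℝ), t * z < δ := by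
    have hlim : Tendsto (· * z) (𝓝[>] (0 : ℝ)) (𝓝 0) := by
      simpa using ((tendsto_id (x := 𝓝 (0 : ℝ))).mul_const z).mono_left nhdsWithin_le_nhds
    exact hlim.eventually (gt_mem_nhds hδ)
  obtain ⟨t, ⟨htx, hty⟩, ht⟩ := ((small x).and (small y) |>.and self_mem_nhdsWithin).exists
  exact ⟨t, ht, htx, hty⟩

theorem local_maximizer_zero_implies_zero_general (n1 n2 m r p : ℕ)
    (Ub : Matrix (Fin n1) (Fin n1) ℝ) (Vb : Matrix (Fin n2) (Fin n2) ℝ)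
    (Φ : Matrix (Fin n1) (Fin n2) ℝ →ₗ[ℝ] EuclideanSpace ℝ (Fin m))
    (A : Matrix (Fin r) (Fin r) ℝ) (B : Matrix (Fin r) (Fin (p - r)) ℝ)
    (C : Matrix (Fin (p - r)) (Fin (p - r)) ℝ)
    -- (A, B, C) is feasible
    (hA : Aᵀ = A) (hC : C.PosSemidef)
    (hfeas : Φ (Ub * blockRect n1 n2 r p A (B * C) C * Vbᵀ) = 0)
    -- (0, B, 0) is a local maximizer
    (hloc : ∃ δ > (0:ℝ), ∀ (A' : Matrix (Fin r) (Fin r) ℝ)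
        (B' : Matrix (Fin r) (Fin (p - r)) ℝ)
        (C' : Matrix (Fin (p - r)) (Fin (p - r)) ℝ),
      A'ᵀ = A' → C'.PosSemidef →
      Φ (Ub * blockRect n1 n2 r p A' (B' * C') C' * Vbᵀ) = 0 →
      frobNorm (A' - 0) < δ → frobNorm (B' - B) < δ → frobNorm (C' - 0) < δ →
      1 / 2 * frobNorm A' ^ 2 + 1 / 2 * frobNorm C' ^ 2 ≤
        1 / 2 * frobNorm (0 : Matrix (Fin r) (Fin r) ℝ) ^ 2 +
          1 / 2 * frobNorm (0 : Matrix (Fin (p - r)) (Fin (p - r)) ℝ) ^ 2) :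
    A = 0 ∧ C = 0 := by
  obtain ⟨δ, hδ, hmax⟩ := hloc
  simp only [frobNorm_eq_norm, sub_zero, norm_zero] at hmax
  obtain ⟨t, ht, htA, htC⟩ := exists_pos_mul_lt_and_mul_lt hδ ‖A‖ ‖C‖
  have hscaled_feas : Φ (Ub * blockRect n1 n2 r p (t • A) (B * (t • C)) (t • C) * Vbᵀ) = 0 := by
    rw [blockRect_smul_mul_smul, Matrix.mul_smul, Matrix.smul_mul, map_smul, hfeas, smul_zero]
  have hvalue := hmax (t • A) B (t • C) (by rw [transpose_smul, hA]) (hC.smul ht.le)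
    hscaled_feas (by rwa [norm_smul, Real.norm_of_nonneg ht.le]) (by rwa [sub_self, norm_zero])
    (by rwa [norm_smul, Real.norm_of_nonneg ht.le])
  rw [norm_smul, norm_smul, Real.norm_of_nonneg ht.le] at hvalue
  have hsum : ‖A‖ ^ 2 + ‖C‖ ^ 2 ≤ 0 :=
    nonpos_of_mul_nonpos_right (by linarith) (pow_pos ht 2)
  have hA0 : ‖A‖ = 0 := by nlinarith [norm_nonneg A, norm_nonneg C]
  have hC0 : ‖C‖ = 0 := by nlinarith [norm_nonneg A, norm_nonneg C]
  exact ⟨norm_eq_zero.mp hA0, norm_eq_zero.mp hC0⟩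

/-- **Remark (Checking the uniqueness condition via optimization).**
Consider maximizing `½‖A‖_F² + ½‖C‖_F²` over `(A,B,C) ∈ S^r × ℝ^{r×(p−r)} × S₊^{p−r}`
subject to `Φ(Ū [A BC 0; CᵀBᵀ C 0; 0 0 0] V̄ᵀ) = 0`.  If `(A,B,C)` is feasible and
`(0,B,0)` is a local maximizer, then `A = 0` and `C = 0`. -/
theorem local_maximizer_zero_implies_zero (n1 n2 m r p : ℕ)
    (hrp : r ≤ p) (hpn : p ≤ n1) (hn : n1 ≤ n2)
    (Ub : Matrix (Fin n1) (Fin n1) ℝ) (Vb : Matrix (Fin n2) (Fin n2) ℝ)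
    (hU : Ubᵀ * Ub = 1) (hV : Vbᵀ * Vb = 1)
    (Φ : Matrix (Fin n1) (Fin n2) ℝ →ₗ[ℝ] EuclideanSpace ℝ (Fin m))
    (A : Matrix (Fin r) (Fin r) ℝ) (B : Matrix (Fin r) (Fin (p - r)) ℝ)
    (C : Matrix (Fin (p - r)) (Fin (p - r)) ℝ)
    -- (A, B, C) is feasible
    (hA : Aᵀ = A) (hC : C.PosSemidef)
    (hfeas : Φ (Ub * blockRect n1 n2 r p A (B * C) C * Vbᵀ) = 0)
    -- (0, B, 0) is a local maximizer
    (hloc : ∃ δ > (0:ℝ), ∀ (A' : Matrix (Fin r) (Fin r) ℝ)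
        (B' : Matrix (Fin r) (Fin (p - r)) ℝ)
        (C' : Matrix (Fin (p - r)) (Fin (p - r)) ℝ),
      A'ᵀ = A' → C'.PosSemidef →
      Φ (Ub * blockRect n1 n2 r p A' (B' * C') C' * Vbᵀ) = 0 →
      frobNorm (A' - 0) < δ → frobNorm (B' - B) < δ → frobNorm (C' - 0) < δ →
      1 / 2 * frobNorm A' ^ 2 + 1 / 2 * frobNorm C' ^ 2 ≤
        1 / 2 * frobNorm (0 : Matrix (Fin r) (Fin r) ℝ) ^ 2 +
          1 / 2 * frobNorm (0 : Matrix (Fin (p - r)) (Fin (p - r)) ℝ) ^ 2) :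
    A = 0 ∧ C = 0 :=
  local_maximizer_zero_implies_zero_general n1 n2 m r p Ub Vb Φ A B C hA hC hfeas hloc
end

section
/- Let g: X → ℝ be a continuous convex function, Φ: X → Y a linear operator, and x₀ a feasible point of the problem min g(x) subject to Φx = Φx₀. Then x₀ is the unique optimal solution of this problem if and only if Ker Φ ∩ D_g(x₀) = {0}. -/
open Filter Set

/-- The descent cone `D_g(x₀) = cone {x − x₀ : g(x) ≤ g(x₀)}`. -/
def descCone {X : Type*} [AddCommGroup X] [Module ℝ X] (g : X → ℝ) (x : X) : Set X :=
  {w | ∃ t : ℝ, 0 ≤ t ∧ ∃ z, g z ≤ g x ∧ w = t • (z - x)}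

section DescentCone

variable {X Y : Type*} [AddCommGroup X] [Module ℝ X] [AddCommGroup Y] [Module ℝ Y]

theorem zero_mem_descCone (g : X → ℝ) (x : X) : (0 : X) ∈ descCone g x :=
  ⟨0, le_rfl, x, le_rfl, by simp⟩

theorem sub_mem_descCone {g : X → ℝ} {x z : X} (hz : g z ≤ g x) : z - x ∈ descCone g x :=
  ⟨1, zero_le_one, z, hz, by simp⟩

theorem ker_inter_descCone_eq_zero_iff (Φ : X →ₗ[ℝ] Y) (g : X → ℝ) (x : X) :
    (LinearMap.ker Φ : Set X) ∩ descCone g x = {0} ↔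
      ∀ z, Φ z = Φ x → g z ≤ g x → z = x := by
  rw [Set.eq_singleton_iff_unique_mem]
  constructor
  · rintro ⟨-, hzero⟩ z hΦ hz
    exact sub_eq_zero.mp (hzero (z - x) ⟨by simp [hΦ], sub_mem_descCone hz⟩)
  · intro huniq
    refine ⟨⟨zero_mem _, zero_mem_descCone g x⟩, ?_⟩
    rintro _ ⟨hker, t, -, z, hz, rfl⟩
    rw [SetLike.mem_coe, LinearMap.mem_ker, map_smul, smul_eq_zero, map_sub, sub_eq_zero] at hker
    rcases hker with rfl | hΦ
    · exact zero_smul ℝ _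
    · rw [huniq z hΦ hz, sub_self, smul_zero]

end DescentCone

theorem unique_solution_iff_descent_cone_general
    {X Y : Type*} [NormedAddCommGroup X] [InnerProductSpace ℝ X]
    [NormedAddCommGroup Y] [InnerProductSpace ℝ Y]
    (Φ : X →ₗ[ℝ] Y) (g : X → ℝ) (x₀ : X) :
    (∀ x, Φ x = Φ x₀ → x ≠ x₀ → g x₀ < g x) ↔
      (LinearMap.ker Φ : Set X) ∩ descCone g x₀ = {0} := by
  rw [ker_inter_descCone_eq_zero_iff]
  refine forall_congr' fun x => imp_congr_right fun _ => ?_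
  rw [← not_le]
  exact not_imp_not

/-- **Proposition (Descent cone for solution uniqueness).**  For a continuous convex
function `g`, a feasible point `x₀` of `min g(x) s.t. Φx = Φx₀` is the unique optimal
solution if and only if `Ker Φ ∩ D_g(x₀) = {0}`. -/
theorem unique_solution_iff_descent_cone
    {X Y : Type*} [NormedAddCommGroup X] [InnerProductSpace ℝ X] [FiniteDimensional ℝ X]
    [NormedAddCommGroup Y] [InnerProductSpace ℝ Y] [FiniteDimensional ℝ Y]
    (Φ : X →ₗ[ℝ] Y) (g : X → ℝ)
    (hconv : ConvexOn ℝ Set.univ g) (hcont : Continuous g) (x₀ : X) :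
    (∀ x, Φ x = Φ x₀ → x ≠ x₀ → g x₀ < g x) ↔
      (LinearMap.ker Φ : Set X) ∩ descCone g x₀ = {0} :=
  unique_solution_iff_descent_cone_general Φ g x₀
end

section
/- Let g: X → ℝ be a continuous convex function, Φ: X → Y a linear operator, and let x₀ be an optimal solution of the problem min g(x) subject to Φx = Φx₀ (so that Δ(x₀) := ∂g(x₀) ∩ Im Φ* ≠ ∅). Then for every dual certificate y ∈ Δ(x₀), Ker Φ ∩ D_g(x₀) = Ker Φ ∩ R_{∂g*(y)}(x₀). -/
open Filter Set

/-- Subdifferential of a (finite-valued) convex function `g` at `x`. -/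
def subdiff {X : Type*} [NormedAddCommGroup X] [InnerProductSpace ℝ X]
    (g : X → ℝ) (x : X) : Set X :=
  {v | ∀ z, (inner ℝ v (z - x) : ℝ) ≤ g z - g x}

/-!
On `x₀ + Ker Φ` a certificate `y = Φ* u` is orthogonal to every displacement `z - x₀`.
Hence, on that affine fibre, `y ∈ ∂g(z)` holds exactly when `g z = g x₀`, which by optimality
of `x₀` is the same as `g z ≤ g x₀`. A direction `t (z - x₀) ∈ Ker Φ` with `t > 0` has `z` in
that fibre, so within `Ker Φ` both cones are generated by the same set.
-/

theorem descCone_eq_radialCone {X : Type*} [AddCommGroup X] [Module ℝ X] (g : X → ℝ) (x : X) :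
    descCone g x = radialCone {z | g z ≤ g x} x :=
  rfl

theorem radialCone_mono {M : Type*} [AddCommGroup M] [Module ℝ M] {S T : Set M} (h : S ⊆ T)
    (x : M) : radialCone S x ⊆ radialCone T x := by
  rintro w ⟨t, ht, z, hz, rfl⟩
  exact ⟨t, ht, z, h hz, rfl⟩

theorem ker_inter_radialCone_eq_inter_fiber {M N : Type*} [AddCommGroup M] [Module ℝ M]
    [AddCommGroup N] [Module ℝ N] (Φ : M →ₗ[ℝ] N) {S : Set M} {x : M} (hx : x ∈ S) :
    (LinearMap.ker Φ : Set M) ∩ radialCone S x =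
      (LinearMap.ker Φ : Set M) ∩ radialCone (S ∩ {z | Φ z = Φ x}) x := by
  refine Subset.antisymm ?_ (inter_subset_inter_right _ (radialCone_mono inter_subset_left x))
  rintro w ⟨hw, t, ht, z, hz, rfl⟩
  refine ⟨hw, ?_⟩
  rcases ht.eq_or_lt with rfl | ht
  · exact ⟨0, le_rfl, x, ⟨hx, rfl⟩, by simp⟩
  · have hΦ : t • (Φ z - Φ x) = 0 := by simpa [map_sub] using hw
    have hz' : Φ z = Φ x := sub_eq_zero.mp ((smul_eq_zero.mp hΦ).resolve_left ht.ne')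
    exact ⟨t, ht.le, z, ⟨hz, hz'⟩, rfl⟩

theorem inner_adjoint_sub_eq_zero_of_map_eq {X Y : Type*} [NormedAddCommGroup X]
    [InnerProductSpace ℝ X] [FiniteDimensional ℝ X] [NormedAddCommGroup Y]
    [InnerProductSpace ℝ Y] [FiniteDimensional ℝ Y] (Φ : X →ₗ[ℝ] Y) (u : Y) {x z : X}
    (h : Φ z = Φ x) : inner ℝ (LinearMap.adjoint Φ u) (z - x) = 0 := by
  rw [LinearMap.adjoint_inner_left, map_sub, h, sub_self, inner_zero_right]

theorem mem_subdiff_iff_of_inner_sub_eq_zero {X : Type*} [NormedAddCommGroup X]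
    [InnerProductSpace ℝ X] {g : X → ℝ} {x z y : X} (hy : y ∈ subdiff g x)
    (h : inner ℝ y (z - x) = 0) : y ∈ subdiff g z ↔ g z = g x := by
  constructor
  · intro hyz
    have hxz : inner ℝ y (x - z) = 0 := by rw [← neg_sub, inner_neg_right, h, neg_zero]
    have h₁ := hyz x
    have h₂ := hy z
    rw [hxz] at h₁
    rw [h] at h₂
    linarith
  · intro hgz v
    have hsplit : inner ℝ y (v - z) = inner ℝ y (v - x) - inner ℝ y (z - x) := by
      rw [← inner_sub_right, sub_sub_sub_cancel_right]
    rw [hsplit, h, sub_zero, hgz]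
    exact hy v

theorem kernel_inter_descent_eq_kernel_inter_radial_general
    {X Y : Type*} [NormedAddCommGroup X] [InnerProductSpace ℝ X] [FiniteDimensional ℝ X]
    [NormedAddCommGroup Y] [InnerProductSpace ℝ Y] [FiniteDimensional ℝ Y]
    (Φ : X →ₗ[ℝ] Y) (g : X → ℝ)
    (x₀ : X)
    (hopt : ∀ x, Φ x = Φ x₀ → g x₀ ≤ g x) :
    ∀ y ∈ subdiff g x₀ ∩ (LinearMap.range (LinearMap.adjoint Φ) : Set X),
      (LinearMap.ker Φ : Set X) ∩ descCone g x₀ =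
        (LinearMap.ker Φ : Set X) ∩ radialCone {x | y ∈ subdiff g x} x₀ := by
  rintro y ⟨hy, u, rfl⟩
  rw [descCone_eq_radialCone,
    ker_inter_radialCone_eq_inter_fiber Φ (S := {z | g z ≤ g x₀}) (le_refl (g x₀)),
    ker_inter_radialCone_eq_inter_fiber Φ (S := {x | _ ∈ subdiff g x}) hy]
  congr 2
  ext z
  simp only [mem_inter_iff, mem_ofPred_eq, and_congr_left_iff]
  intro hz
  rw [mem_subdiff_iff_of_inner_sub_eq_zero hy (inner_adjoint_sub_eq_zero_of_map_eq Φ u hz)]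
  exact ⟨fun h => le_antisymm h (hopt z hz), le_of_eq⟩

/-- **Proposition.**  Let `x₀` be an optimal solution of `min g(x) s.t. Φx = Φx₀`
(so that the set of dual certificates `Δ(x₀) = ∂g(x₀) ∩ Im Φ*` is nonempty).  Then for
every dual certificate `y ∈ Δ(x₀)`,
`Ker Φ ∩ D_g(x₀) = Ker Φ ∩ R_{∂g*(y)}(x₀)`. -/
theorem kernel_inter_descent_eq_kernel_inter_radial
    {X Y : Type*} [NormedAddCommGroup X] [InnerProductSpace ℝ X] [FiniteDimensional ℝ X]
    [NormedAddCommGroup Y] [InnerProductSpace ℝ Y] [FiniteDimensional ℝ Y]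
    (Φ : X →ₗ[ℝ] Y) (g : X → ℝ)
    (hconv : ConvexOn ℝ Set.univ g) (hcont : Continuous g) (x₀ : X)
    (hopt : ∀ x, Φ x = Φ x₀ → g x₀ ≤ g x)
    (hΔ : (subdiff g x₀ ∩ (LinearMap.range (LinearMap.adjoint Φ) : Set X)).Nonempty) :
    ∀ y ∈ subdiff g x₀ ∩ (LinearMap.range (LinearMap.adjoint Φ) : Set X),
      (LinearMap.ker Φ : Set X) ∩ descCone g x₀ =
        (LinearMap.ker Φ : Set X) ∩ radialCone {x | y ∈ subdiff g x} x₀ :=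
  kernel_inter_descent_eq_kernel_inter_radial_general Φ g x₀ hopt
end

section
/- Let g: X → ℝ be a continuous convex function, Φ: X → Y a linear operator, and x₀ feasible for the problem min g(x) subject to Φx = Φx₀. The following are equivalent: (i) x₀ is the unique optimal solution; (ii) Δ(x₀) := ∂g(x₀) ∩ Im Φ* ≠ ∅ and for every y ∈ Δ(x₀), Ker Φ ∩ R_{∂g*(y)}(x₀) = {0}; (iii) Δ(x₀) ≠ ∅ and there exists ȳ ∈ Δ(x₀) with Ker Φ ∩ R_{∂g*(ȳ)}(x₀) = {0}. -/
/-!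
A dual certificate `y ∈ ∂g(x₀) ∩ (Ker Φ)ᗮ` gives `g ≥ g(x₀)` on the feasible set `x₀ + Ker Φ`,
with equality exactly at the feasible points `x` with `y ∈ ∂g(x)`, i.e. on `∂g*(y)`. So for every
certificate, uniqueness of the solution says that `∂g*(y)` meets `x₀ + Ker Φ` only in `x₀`, which is
the radial-cone condition. A certificate exists as soon as `x₀` is optimal: separate the open strict
epigraph of `g` from the affine set `(x₀ + Ker Φ) × {g(x₀)}` and represent the linear part of the
separating functional by Riesz; it lies in `(Ker Φ)ᗮ = Im Φ*`.
-/

open Filter Set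

theorem eq_zero_of_forall_le_add_mul {𝕜 : Type*} [Field 𝕜] [LinearOrder 𝕜] [IsStrictOrderedRing 𝕜]
    {u a b : 𝕜} (h : ∀ r, u ≤ a + r * b) : b = 0 := by
  by_contra hb
  have := h ((u - a - 1) / b)
  rw [div_mul_cancel₀ _ hb] at this
  linarith

theorem ConvexOn.exists_strongDual_vanishing_le_sub
    {E : Type*} [TopologicalSpace E] [AddCommGroup E] [Module ℝ E] [IsTopologicalAddGroup E]
    [ContinuousSMul ℝ E] {g : E → ℝ} (hconv : ConvexOn ℝ univ g) (hcont : Continuous g)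
    (V : Submodule ℝ E) {x₀ : E} (hmin : ∀ z, z - x₀ ∈ V → g x₀ ≤ g z) :
    ∃ ℓ : StrongDual ℝ E, (∀ v ∈ V, ℓ v = 0) ∧ ∀ z, ℓ (z - x₀) ≤ g z - g x₀ := by
  set epi : Set (E × ℝ) := {p | g p.1 < p.2}
  set L : AffineSubspace ℝ (E × ℝ) := AffineSubspace.mk' (x₀, g x₀) (V.prod ⊥)
  have hL : ∀ z t, (z, t) ∈ L ↔ z - x₀ ∈ V ∧ t = g x₀ := by
    simp [L, AffineSubspace.mem_mk', sub_eq_zero]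
  have hdisj : Disjoint epi L := by
    refine Set.disjoint_left.mpr fun ⟨z, t⟩ hepi hzt => ?_
    obtain ⟨hz, rfl⟩ := (hL z t).mp hzt
    exact (hmin z hz).not_gt hepi
  obtain ⟨f, u, hf_epi, hf_L⟩ := geometric_hahn_banach_open
    (by simpa using hconv.convex_strict_epigraph) (isOpen_lt (by fun_prop) continuous_snd)
    L.convex hdisj
  set ℓ₀ := f.comp (ContinuousLinearMap.inl ℝ E ℝ)
  set c := f (0, 1)
  have hf : ∀ z t, f (z, t) = ℓ₀ z + t * c := by
    intro z t
    rw [show (z, t) = (z, 0) + t • ((0 : E), (1 : ℝ)) by simp, map_add, map_smul, smul_eq_mul]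
    rfl
  have hx₀ : u ≤ ℓ₀ x₀ + g x₀ * c := hf x₀ _ ▸ hf_L (x₀, g x₀) ((hL _ _).mpr ⟨by simp, rfl⟩)
  have hc : c < 0 := by
    have := hf x₀ _ ▸ hf_epi (x₀, g x₀ + 1) (by simp)
    linarith
  have hℓ₀V : ∀ v ∈ V, ℓ₀ v = 0 := by
    intro v hv
    refine eq_zero_of_forall_le_add_mul (u := u - g x₀ * c) (a := ℓ₀ x₀) fun r => ?_
    have := hf_L (x₀ + r • v, g x₀) ((hL _ _).mpr ⟨by simpa using V.smul_mem r hv, rfl⟩)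
    rw [hf, map_add, map_smul, smul_eq_mul] at this
    linarith
  have hℓ₀ : ∀ z, ℓ₀ (z - x₀) ≤ -c * (g z - g x₀) := by
    intro z
    -- `f < u` on the open epigraph, hence `f ≤ u` on the graph of `g`
    have hgraph : (u - ℓ₀ z) / c ≤ g z := by
      refine le_of_forall_gt_imp_ge_of_dense fun t ht => ?_
      have := hf_epi (z, t) ht
      rw [hf] at this
      rw [div_le_iff_of_neg hc]
      linarith
    rw [div_le_iff_of_neg hc] at hgraph
    rw [map_sub]
    linarith
  refine ⟨(-c)⁻¹ • ℓ₀, fun v hv => by simp [hℓ₀V v hv], fun z => ?_⟩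
  rw [smul_apply, smul_eq_mul, inv_mul_le_iff₀ (by linarith)]
  exact hℓ₀ z

theorem ConvexOn.nonempty_subdiff_inter_orthogonal
    {X : Type*} [NormedAddCommGroup X] [InnerProductSpace ℝ X] [CompleteSpace X] {g : X → ℝ}
    (hconv : ConvexOn ℝ univ g) (hcont : Continuous g) (V : Submodule ℝ X) {x₀ : X}
    (hmin : ∀ z, z - x₀ ∈ V → g x₀ ≤ g z) :
    (subdiff g x₀ ∩ Vᗮ).Nonempty := by
  obtain ⟨ℓ, hℓV, hℓ⟩ := hconv.exists_strongDual_vanishing_le_sub hcont V hmin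
  refine ⟨(InnerProductSpace.toDual ℝ X).symm ℓ, fun z => ?_, fun v hv => ?_⟩
  · simpa only [InnerProductSpace.toDual_symm_apply] using hℓ z
  · rw [real_inner_comm, InnerProductSpace.toDual_symm_apply, hℓV v hv]

section subdiff

variable {X : Type*} [NormedAddCommGroup X] [InnerProductSpace ℝ X] {g : X → ℝ} {x₀ y z : X}

theorem le_of_mem_subdiff_of_inner_eq_zero (hy : y ∈ subdiff g x₀)
    (hz : inner ℝ y (z - x₀) = 0) : g x₀ ≤ g z := by
  linarith [hy z]

theorem mem_subdiff_iff_of_inner_eq_zero (hy : y ∈ subdiff g x₀)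
    (hz : inner ℝ y (z - x₀) = 0) : y ∈ subdiff g z ↔ g z = g x₀ := by
  constructor
  · intro hyz
    have := hyz x₀
    rw [← neg_sub, inner_neg_right, hz, neg_zero] at this
    linarith [le_of_mem_subdiff_of_inner_eq_zero hy hz]
  · intro hgz w
    have := hy w
    rwa [← sub_sub_sub_cancel_right w z x₀, inner_sub_right, hz, sub_zero, hgz]

end subdiff

theorem inter_radialCone_eq_zero_iff {M : Type*} [AddCommGroup M] [Module ℝ M]
    (V : Submodule ℝ M) {Ω : Set M} {x : M} (hx : x ∈ Ω) :
    (V : Set M) ∩ radialCone Ω x = {0} ↔ ∀ z ∈ Ω, z - x ∈ V → z = x := by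
  constructor
  · intro h z hz hzV
    have : z - x ∈ (V : Set M) ∩ radialCone Ω x := ⟨hzV, 1, zero_le_one, z, hz, (one_smul ℝ _).symm⟩
    rw [h, mem_singleton_iff, sub_eq_zero] at this
    exact this
  · intro h
    refine eq_singleton_iff_unique_mem.mpr
      ⟨⟨V.zero_mem, 0, le_rfl, x, hx, (zero_smul ℝ _).symm⟩, ?_⟩
    rintro _ ⟨hw, t, -, z, hz, rfl⟩
    rcases eq_or_ne t 0 with rfl | ht
    · exact zero_smul ℝ _
    · rw [h z hz ((V.smul_mem_iff ht).mp hw), sub_self, smul_zero]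

theorem inter_radialCone_subdiff_eq_zero_iff {X : Type*} [NormedAddCommGroup X]
    [InnerProductSpace ℝ X] {g : X → ℝ} (V : Submodule ℝ X) {x₀ y : X}
    (hy : y ∈ subdiff g x₀) (hyV : y ∈ Vᗮ) :
    (V : Set X) ∩ radialCone {x | y ∈ subdiff g x} x₀ = {0} ↔
      ∀ z, z - x₀ ∈ V → z ≠ x₀ → g x₀ < g z := by
  rw [inter_radialCone_eq_zero_iff V (Ω := {x | y ∈ subdiff g x}) hy]
  refine forall_congr' fun z => ?_
  constructor
  · intro h hzV hz
    have hinner := V.inner_left_of_mem_orthogonal hzV hyV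
    refine (le_of_mem_subdiff_of_inner_eq_zero hy hinner).lt_of_ne fun hg => hz (h ?_ hzV)
    exact (mem_subdiff_iff_of_inner_eq_zero hy hinner).mpr hg.symm
  · intro h hyz hzV
    by_contra hz
    have hg := (mem_subdiff_iff_of_inner_eq_zero hy (V.inner_left_of_mem_orthogonal hzV hyV)).mp hyz
    exact (h hzV hz).ne' hg

/-- **Theorem (Characterizations of solution uniqueness via radial cones).**
For a continuous convex `g` and a feasible point `x₀` of `min g(x) s.t. Φx = Φx₀`,
with `Δ(x₀) = ∂g(x₀) ∩ Im Φ*` the set of dual certificates, the following are equivalent: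
(i) `x₀` is the unique optimal solution;
(ii) `Δ(x₀) ≠ ∅` and `Ker Φ ∩ R_{∂g*(y)}(x₀) = {0}` for every `y ∈ Δ(x₀)`;
(iii) `Δ(x₀) ≠ ∅` and `Ker Φ ∩ R_{∂g*(ȳ)}(x₀) = {0}` for some `ȳ ∈ Δ(x₀)`. -/
theorem unique_solution_tfae_radial_cone
    {X Y : Type*} [NormedAddCommGroup X] [InnerProductSpace ℝ X] [FiniteDimensional ℝ X]
    [NormedAddCommGroup Y] [InnerProductSpace ℝ Y] [FiniteDimensional ℝ Y]
    (Φ : X →ₗ[ℝ] Y) (g : X → ℝ)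
    (hconv : ConvexOn ℝ Set.univ g) (hcont : Continuous g) (x₀ : X) :
    ((∀ x, Φ x = Φ x₀ → x ≠ x₀ → g x₀ < g x) ↔
      ((subdiff g x₀ ∩ (LinearMap.range (LinearMap.adjoint Φ) : Set X)).Nonempty ∧
        ∀ y ∈ subdiff g x₀ ∩ (LinearMap.range (LinearMap.adjoint Φ) : Set X),
          (LinearMap.ker Φ : Set X) ∩ radialCone {x | y ∈ subdiff g x} x₀ = {0})) ∧
    (((subdiff g x₀ ∩ (LinearMap.range (LinearMap.adjoint Φ) : Set X)).Nonempty ∧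
        ∀ y ∈ subdiff g x₀ ∩ (LinearMap.range (LinearMap.adjoint Φ) : Set X),
          (LinearMap.ker Φ : Set X) ∩ radialCone {x | y ∈ subdiff g x} x₀ = {0}) ↔
      ((subdiff g x₀ ∩ (LinearMap.range (LinearMap.adjoint Φ) : Set X)).Nonempty ∧
        ∃ y ∈ subdiff g x₀ ∩ (LinearMap.range (LinearMap.adjoint Φ) : Set X),
          (LinearMap.ker Φ : Set X) ∩ radialCone {x | y ∈ subdiff g x} x₀ = {0})) := by
  simp only [← LinearMap.sub_mem_ker_iff, ← LinearMap.orthogonal_ker]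
  have hcert := fun y (hy : y ∈ subdiff g x₀ ∩ ((LinearMap.ker Φ)ᗮ : Set X)) =>
    inter_radialCone_subdiff_eq_zero_iff (LinearMap.ker Φ) hy.1 hy.2
  refine ⟨⟨fun huniq => ⟨?_, fun y hy => (hcert y hy).mpr huniq⟩, ?_⟩, ⟨?_, ?_⟩⟩
  · refine hconv.nonempty_subdiff_inter_orthogonal hcont _ fun x hx => ?_
    rcases eq_or_ne x x₀ with rfl | hne
    exacts [le_rfl, (huniq x hx hne).le]
  · rintro ⟨⟨y, hy⟩, hcone⟩
    exact (hcert y hy).mp (hcone y hy)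
  · rintro ⟨⟨y, hy⟩, hcone⟩
    exact ⟨⟨y, hy⟩, y, hy, hcone y hy⟩
  · rintro ⟨hΔ, y, hy, hcone⟩
    exact ⟨hΔ, fun y' hy' => (hcert y' hy').mpr ((hcert y hy).mp hcone)⟩
end

section
/- Let X₀ be an optimal solution of the nuclear norm minimization problem min ‖X‖_* subject to ΦX = ΦX₀ (Φ: ℝ^{n1×n2} → ℝ^m linear, n2 ≥ n1), with compact SVD X₀ = U₀Σ₀V₀ᵀ, rank(X₀) = r. (i) If X₀ is the unique solution, then the Strict Restricted Injectivity condition Ker Φ ∩ U₀ S^r V₀ᵀ = {0} holds. (ii) If in addition the Nondegenerate Source Condition Im Φ* ∩ ri(∂‖X₀‖_*) ≠ ∅ holds, then Strict Restricted Injectivity is also sufficient: it implies X₀ is the unique solution. -/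
open Matrix Filter Set

/-- The spectral norm `‖X‖ = σ₁(X)`. -/
noncomputable def spectralNormMat {a b : ℕ} (X : Matrix (Fin a) (Fin b) ℝ) : ℝ :=
  ⨆ i, svals X i

/-!
(i) If `Z = U₀ A V₀ᵀ ∈ Ker Φ` with `A` symmetric, then `Σ₀ ± t A` is positive semidefinite for
small `t > 0`, so `‖X₀ ± t Z‖_* = tr Σ₀ ± t tr A`. These two feasible points have average norm
`‖X₀‖_*`, which uniqueness forbids unless `Z = 0`.

(ii) Let `Y = Φ* u ∈ ri ∂‖X₀‖_*`. Then `‖Y‖ ≤ 1` and `⟨Y, X₀⟩ = ‖X₀‖_*`, which forces `Y V₀ = U₀`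
and `Yᵀ U₀ = V₀`. Relative interiority makes `Y` strictly contracting away from these subspaces.
A feasible `X` with `‖X‖_* = ‖X₀‖_*` has `⟨Y, X⟩ = ⟨Y, X₀⟩ = ‖X‖_*`, since `Y ⊥ Ker Φ`.
Equality in the duality pairing makes `Y` isometric on the singular vectors of `X`, so these lie
in the column spaces of `U₀` and `V₀`. Hence `X - X₀ ∈ Ker Φ ∩ U₀ S^r V₀ᵀ = {0}`.
-/

section Contraction

variable {l m n : Type*} [Fintype l] [Fintype m] [Fintype n]

lemma dotProduct_self_nonneg (v : n → ℝ) : 0 ≤ v ⬝ᵥ v := dotProduct_star_self_nonneg v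

lemma dotProduct_le_sqrt_mul_sqrt (u v : n → ℝ) : u ⬝ᵥ v ≤ √(u ⬝ᵥ u) * √(v ⬝ᵥ v) := by
  calc u ⬝ᵥ v ≤ √((u ⬝ᵥ v) ^ 2) := by rw [Real.sqrt_sq_eq_abs]; exact le_abs_self _
    _ ≤ √((∑ i, u i ^ 2) * ∑ i, v i ^ 2) :=
        Real.sqrt_le_sqrt (Finset.sum_mul_sq_le_sq_mul_sq _ u v)
    _ = √(u ⬝ᵥ u) * √(v ⬝ᵥ v) := by
        rw [Real.sqrt_mul (by positivity)]; simp [dotProduct, pow_two]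

/-- Spectral norm at most one. -/
def IsContraction (G : Matrix m n ℝ) : Prop :=
  ∀ u v, u ⬝ᵥ (G *ᵥ v) ≤ √(u ⬝ᵥ u) * √(v ⬝ᵥ v)

lemma isContraction_of_forall_dotProduct_self_le {G : Matrix m n ℝ}
    (hG : ∀ v, (G *ᵥ v) ⬝ᵥ (G *ᵥ v) ≤ v ⬝ᵥ v) : IsContraction G := fun u v =>
  (dotProduct_le_sqrt_mul_sqrt u _).trans <|
    mul_le_mul_of_nonneg_left (Real.sqrt_le_sqrt (hG v)) (Real.sqrt_nonneg _)

lemma isContraction_one_sub_two_smul_vecMulVec [DecidableEq n] {w : n → ℝ} (hw : w ⬝ᵥ w = 1) :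
    IsContraction (1 - (2 : ℝ) • vecMulVec w w) := by
  refine isContraction_of_forall_dotProduct_self_le fun v => le_of_eq ?_
  simp only [sub_mulVec, one_mulVec, smul_mulVec, vecMulVec_mulVec, sub_dotProduct,
    dotProduct_sub, smul_dotProduct, dotProduct_smul, hw, dotProduct_comm v w]
  simp only [MulOpposite.smul_eq_mul_unop, MulOpposite.unop_op, smul_eq_mul, one_mul]
  ring

namespace IsContraction

variable {G : Matrix m n ℝ}

lemma mulVec_dotProduct_self_le (hG : IsContraction G) (v : n → ℝ) :
    (G *ᵥ v) ⬝ᵥ (G *ᵥ v) ≤ v ⬝ᵥ v := by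
  rw [← Real.sqrt_le_sqrt_iff (dotProduct_self_nonneg v)]
  rcases (Real.sqrt_nonneg ((G *ᵥ v) ⬝ᵥ (G *ᵥ v))).eq_or_lt with h0 | hpos
  · rw [← h0]; exact Real.sqrt_nonneg _
  · refine le_of_mul_le_mul_left ?_ hpos
    rw [Real.mul_self_sqrt (dotProduct_self_nonneg _)]
    exact hG (G *ᵥ v) v

lemma dotProduct_mulVec_le_one (hG : IsContraction G) {u : m → ℝ} {v : n → ℝ}
    (hu : u ⬝ᵥ u = 1) (hv : v ⬝ᵥ v = 1) : u ⬝ᵥ (G *ᵥ v) ≤ 1 := by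
  simpa [hu, hv] using hG u v

lemma transpose (hG : IsContraction G) : IsContraction Gᵀ := fun u v => by
  rw [mulVec_transpose, dotProduct_comm, ← dotProduct_mulVec, mul_comm]
  exact hG v u

lemma mul {H : Matrix n l ℝ} (hG : IsContraction G) (hH : IsContraction H) :
    IsContraction (G * H) := fun u v => by
  rw [← mulVec_mulVec]
  exact (hG u _).trans <| mul_le_mul_of_nonneg_left
    (Real.sqrt_le_sqrt (hH.mulVec_dotProduct_self_le v)) (Real.sqrt_nonneg _)

lemma mulVec_eq_of_dotProduct_mulVec_eq_one (hG : IsContraction G) {u : m → ℝ} {v : n → ℝ}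
    (hu : u ⬝ᵥ u = 1) (hv : v ⬝ᵥ v = 1) (h : u ⬝ᵥ (G *ᵥ v) = 1) : G *ᵥ v = u := by
  have hGv := (hG.mulVec_dotProduct_self_le v).trans_eq hv
  have : (G *ᵥ v - u) ⬝ᵥ (G *ᵥ v - u) = 0 := by
    refine le_antisymm ?_ (dotProduct_self_nonneg _)
    rw [sub_dotProduct, dotProduct_sub, dotProduct_sub, dotProduct_comm (G *ᵥ v) u, h, hu]
    linarith
  exact sub_eq_zero.mp (dotProduct_self_eq_zero.mp this)

/-- Composing with the reflection in `w⊥` turns `G` into `G - 2 (G w) wᵀ`. -/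
lemma sub_two_smul_vecMulVec [DecidableEq n] (hG : IsContraction G) {u : m → ℝ} {w : n → ℝ}
    (hw : w ⬝ᵥ w = 1) (hGw : G *ᵥ w = u) : IsContraction (G - (2 : ℝ) • vecMulVec u w) := by
  have h := hG.mul (isContraction_one_sub_two_smul_vecMulVec hw)
  rwa [Matrix.mul_sub, Matrix.mul_one, Matrix.mul_smul, mul_vecMulVec, hGw] at h

end IsContraction

end Contraction

section Finner

variable {a b : ℕ}

def finnerₗ (Y : Matrix (Fin a) (Fin b) ℝ) : Matrix (Fin a) (Fin b) ℝ →ₗ[ℝ] ℝ :=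
  traceLinearMap (Fin b) ℝ ℝ ∘ₗ mulLeftLinearMap (Fin b) ℝ Yᵀ

lemma finnerₗ_apply (Y Z : Matrix (Fin a) (Fin b) ℝ) : finnerₗ Y Z = finner Y Z := rfl

lemma finner_sub_right (Y A B : Matrix (Fin a) (Fin b) ℝ) :
    finner Y (A - B) = finner Y A - finner Y B :=
  map_sub (finnerₗ Y) A B

lemma finner_comm (Y Z : Matrix (Fin a) (Fin b) ℝ) : finner Y Z = finner Z Y := by
  rw [finner, finner, ← trace_transpose, transpose_mul, transpose_transpose]

lemma finner_vecMulVec (Y : Matrix (Fin a) (Fin b) ℝ) (u : Fin a → ℝ) (v : Fin b → ℝ) :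
    finner Y (vecMulVec u v) = u ⬝ᵥ (Y *ᵥ v) := by
  rw [finner, mul_vecMulVec, trace_vecMulVec, mulVec_transpose, dotProduct_mulVec]

end Finner

section NuclearNorm

variable {a b : ℕ}

open scoped MatrixOrder

lemma nuclearNorm_eq_sum_sqrt_eigenvalues (X : Matrix (Fin a) (Fin b) ℝ) :
    nuclearNorm X = ∑ i, √((isHermitian_mul_conjTranspose_self X).eigenvalues i) := by
  unfold nuclearNorm svals
  exact Equiv.sum_comp (Fin.revPerm.trans (Tuple.sort _))
    fun j => √((isHermitian_mul_conjTranspose_self X).eigenvalues j)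

lemma trace_cfcSqrt {P : Matrix (Fin a) (Fin a) ℝ} (hP : P.PosSemidef) :
    (CFC.sqrt P).trace = ∑ i, √(hP.1.eigenvalues i) := by
  rw [CFC.sqrt_eq_real_sqrt P hP.nonneg, cfcₙ_eq_cfc, hP.1.cfc_eq, IsHermitian.cfc,
    Unitary.conjStarAlgAut_apply, trace_mul_comm, ← Matrix.mul_assoc,
    (mem_unitaryGroup_iff').mp hP.1.eigenvectorUnitary.2, Matrix.one_mul]
  simp [trace_diagonal]

lemma nuclearNorm_eq_trace {X : Matrix (Fin a) (Fin b) ℝ} {S : Matrix (Fin a) (Fin a) ℝ}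
    (hS : S.PosSemidef) (h : S * S = X * Xᵀ) : nuclearNorm X = S.trace := by
  rw [nuclearNorm_eq_sum_sqrt_eigenvalues, ← trace_cfcSqrt (posSemidef_self_mul_conjTranspose X),
    CFC.sqrt_unique (a := X * Xᴴ) (by rwa [conjTranspose_eq_transpose_of_trivial]) hS.nonneg]

lemma exists_posSemidef_mul_self_eq (X : Matrix (Fin a) (Fin b) ℝ) :
    ∃ S : Matrix (Fin a) (Fin a) ℝ, S.PosSemidef ∧ S * S = X * Xᵀ := by
  refine ⟨CFC.sqrt (X * Xᴴ), (CFC.sqrt_nonneg _).posSemidef, ?_⟩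
  rw [CFC.sqrt_mul_sqrt_self _ (posSemidef_self_mul_conjTranspose X).nonneg,
    conjTranspose_eq_transpose_of_trivial]

lemma nuclearNorm_smul (X : Matrix (Fin a) (Fin b) ℝ) {t : ℝ} (ht : 0 ≤ t) :
    nuclearNorm (t • X) = t * nuclearNorm X := by
  obtain ⟨S, hS, hSX⟩ := exists_posSemidef_mul_self_eq X
  have htS : (t • S) * (t • S) = (t • X) * (t • X)ᵀ := by
    rw [transpose_smul, Matrix.smul_mul, Matrix.mul_smul, Matrix.smul_mul, Matrix.mul_smul, hSX]
  rw [nuclearNorm_eq_trace hS hSX, nuclearNorm_eq_trace (hS.smul ht) htS, trace_smul, smul_eq_mul]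

lemma nuclearNorm_mul_mul_transpose {r : ℕ} {U : Matrix (Fin a) (Fin r) ℝ}
    {V : Matrix (Fin b) (Fin r) ℝ} (hU : Uᵀ * U = 1) (hV : Vᵀ * V = 1)
    {M : Matrix (Fin r) (Fin r) ℝ} (hM : M.PosSemidef) :
    nuclearNorm (U * M * Vᵀ) = M.trace := by
  have hMt : Mᵀ = M := by simpa using hM.1.eq
  have hS : (U * M * Uᵀ).PosSemidef := by simpa using hM.mul_mul_conjTranspose_same U
  have hSS : (U * M * Uᵀ) * (U * M * Uᵀ) = (U * M * Vᵀ) * (U * M * Vᵀ)ᵀ := by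
    simp only [transpose_mul, transpose_transpose, hMt, Matrix.mul_assoc]
    rw [← Matrix.mul_assoc Uᵀ, ← Matrix.mul_assoc Vᵀ, hU, hV]
  rw [nuclearNorm_eq_trace hS hSS, trace_mul_cycle, hU, Matrix.one_mul]

lemma nuclearNorm_vecMulVec (u : Fin a → ℝ) (v : Fin b → ℝ) :
    nuclearNorm (vecMulVec u v) = √(u ⬝ᵥ u) * √(v ⬝ᵥ v) := by
  have hu : 0 ≤ u ⬝ᵥ u := dotProduct_self_nonneg u
  have hv : 0 ≤ v ⬝ᵥ v := dotProduct_self_nonneg v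
  set c := √(v ⬝ᵥ v) / √(u ⬝ᵥ u)
  have hS : (c • vecMulVec u u).PosSemidef :=
    (posSemidef_vecMulVec_self_star u).smul (by positivity)
  have hSS : (c • vecMulVec u u) * (c • vecMulVec u u) = vecMulVec u v * (vecMulVec u v)ᵀ := by
    rw [transpose_vecMulVec, smul_mul_smul_comm, vecMulVec_mul_vecMulVec, vecMulVec_mul_vecMulVec]
    rcases hu.eq_or_lt with h0 | hpos
    · simp [dotProduct_self_eq_zero.mp h0.symm]
    · simp only [vecMulVec_smul, smul_smul]
      congr 1
      rw [div_mul_div_comm, Real.mul_self_sqrt hv, Real.mul_self_sqrt hu]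
      field_simp
  rw [nuclearNorm_eq_trace hS hSS, trace_smul, trace_vecMulVec, smul_eq_mul, div_mul_eq_mul_div]
  rcases hu.eq_or_lt with h0 | hpos
  · simp [← h0]
  · rw [div_eq_iff (by positivity)]
    nth_rewrite 1 [← Real.mul_self_sqrt hu]
    ring

lemma nuclearNorm_add_vecMulVec {X : Matrix (Fin a) (Fin b) ℝ} {u : Fin a → ℝ} {w : Fin b → ℝ}
    (hu : u ⬝ᵥ u = 1) (hw : w ⬝ᵥ w = 1) (hXu : Xᵀ *ᵥ u = 0) (hXw : X *ᵥ w = 0) :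
    nuclearNorm (X + vecMulVec u w) = nuclearNorm X + 1 := by
  obtain ⟨S, hS, hSX⟩ := exists_posSemidef_mul_self_eq X
  have hSt : Sᵀ = S := by simpa using hS.1.eq
  have hSu : S *ᵥ u = 0 := by
    refine dotProduct_self_eq_zero.mp ?_
    rw [dotProduct_mulVec, ← mulVec_transpose, hSt, mulVec_mulVec, hSX, ← mulVec_mulVec, hXu,
      mulVec_zero, zero_dotProduct]
  have hT : (S + vecMulVec u u).PosSemidef := hS.add (posSemidef_vecMulVec_self_star u)
  have hTT : (S + vecMulVec u u) * (S + vecMulVec u u) =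
      (X + vecMulVec u w) * (X + vecMulVec u w)ᵀ := by
    have h₁ : S * vecMulVec u u = 0 := by rw [mul_vecMulVec, hSu, zero_vecMulVec]
    have h₂ : vecMulVec u u * S = 0 := by
      rw [vecMulVec_mul, ← mulVec_transpose, hSt, hSu, vecMulVec_zero]
    have h₃ : X * vecMulVec w u = 0 := by rw [mul_vecMulVec, hXw, zero_vecMulVec]
    have h₄ : vecMulVec u w * Xᵀ = 0 := by rw [vecMulVec_mul, vecMul_transpose, hXw, vecMulVec_zero]
    rw [transpose_add, transpose_vecMulVec, Matrix.add_mul, Matrix.mul_add, Matrix.mul_add,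
      Matrix.add_mul, Matrix.mul_add, Matrix.mul_add, h₁, h₂, h₃, h₄, hSX,
      vecMulVec_mul_vecMulVec, vecMulVec_mul_vecMulVec, hu, hw]
  rw [nuclearNorm_eq_trace hT hTT, trace_add, trace_vecMulVec, hu, ← nuclearNorm_eq_trace hS hSX]

end NuclearNorm

section SVD

variable {a b : ℕ}

lemma exists_svd (Z : Matrix (Fin a) (Fin b) ℝ) :
    ∃ (W : Matrix (Fin a) (Fin a) ℝ) (V : Matrix (Fin b) (Fin a) ℝ) (s : Fin a → ℝ),
      (∀ i, 0 ≤ s i) ∧ Wᵀ * W = 1 ∧ Vᵀ * V = diagonal (fun i => if s i = 0 then 0 else 1) ∧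
      Z = W * diagonal s * Vᵀ ∧ nuclearNorm Z = ∑ i, s i := by
  set hH := isHermitian_mul_conjTranspose_self Z
  set W : Matrix (Fin a) (Fin a) ℝ := (hH.eigenvectorUnitary : Matrix (Fin a) (Fin a) ℝ)
  have hWW : Wᵀ * W = 1 ∧ W * Wᵀ = 1 := by
    have hstar : star W = Wᵀ := by rw [star_eq_conjTranspose, conjTranspose_eq_transpose_of_trivial]
    exact ⟨hstar ▸ Unitary.coe_star_mul_self _, hstar ▸ Unitary.coe_mul_star_self _⟩
  have hΛ : (Wᵀ * Z) * (Wᵀ * Z)ᵀ = diagonal hH.eigenvalues := by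
    have := hH.conjStarAlgAut_star_eigenvectorUnitary
    simp only [Unitary.conjStarAlgAut_star_apply, star_eq_conjTranspose,
      conjTranspose_eq_transpose_of_trivial] at this
    rw [transpose_mul, transpose_transpose, ← Matrix.mul_assoc, Matrix.mul_assoc Wᵀ]
    exact this
  set s : Fin a → ℝ := fun i => √(hH.eigenvalues i)
  have hsq : ∀ i, hH.eigenvalues i = s i * s i := fun i =>
    (Real.mul_self_sqrt (eigenvalues_self_mul_conjTranspose_nonneg Z i)).symm
  have hVt : ((Wᵀ * Z)ᵀ * diagonal s⁻¹)ᵀ = diagonal s⁻¹ * (Wᵀ * Z) := by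
    rw [transpose_mul, diagonal_transpose, transpose_transpose]
  refine ⟨W, (Wᵀ * Z)ᵀ * diagonal s⁻¹, s, fun i => Real.sqrt_nonneg _, hWW.1, ?_, ?_,
    nuclearNorm_eq_sum_sqrt_eigenvalues Z⟩
  · rw [hVt, Matrix.mul_assoc, ← Matrix.mul_assoc (Wᵀ * Z), hΛ, diagonal_mul_diagonal,
      diagonal_mul_diagonal]
    congr 1
    funext i
    rw [hsq]
    by_cases hs : s i = 0 <;> simp [hs]
  · have hrows : diagonal (fun i => s i * s⁻¹ i) * (Wᵀ * Z) = Wᵀ * Z := by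
      ext i k
      rw [diagonal_mul]
      by_cases hs : s i = 0
      · have hrow := congrFun (congrFun hΛ i) i
        rw [mul_apply', diagonal_apply_eq, hsq, hs, mul_zero] at hrow
        simp [dotProduct_self_eq_zero.mp hrow]
      · simp [hs]
    rw [hVt, Matrix.mul_assoc, ← Matrix.mul_assoc (diagonal s), diagonal_mul_diagonal, hrows,
      ← Matrix.mul_assoc, hWW.2, Matrix.one_mul]

end SVD

lemma mul_diagonal_mul_transpose {k m n : Type*} [Fintype k] [DecidableEq k]
    (W : Matrix m k ℝ) (s : k → ℝ) (V : Matrix n k ℝ) :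
    W * diagonal s * Vᵀ = ∑ i, s i • vecMulVec (W.col i) (V.col i) := by
  ext p q
  rw [mul_apply, Matrix.sum_apply]
  simp only [mul_diagonal, transpose_apply, Matrix.smul_apply, vecMulVec_apply, col_apply,
    smul_eq_mul]
  exact Finset.sum_congr rfl fun i _ => by ring

lemma col_dotProduct_self_eq_one {m n : Type*} [Fintype m] [DecidableEq n] {U : Matrix m n ℝ}
    (hU : Uᵀ * U = 1) (i : n) : U.col i ⬝ᵥ U.col i = 1 :=
  (congrFun (congrFun hU i) i).trans (one_apply_eq i)

lemma exists_sum_smul_vecMulVec {a b : ℕ} (Z : Matrix (Fin a) (Fin b) ℝ) :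
    ∃ (s : Fin a → ℝ) (w : Fin a → Fin a → ℝ) (v : Fin a → Fin b → ℝ),
      (∀ i, 0 ≤ s i) ∧ (∀ i, s i ≠ 0 → w i ⬝ᵥ w i = 1 ∧ v i ⬝ᵥ v i = 1) ∧
      Z = ∑ i, s i • vecMulVec (w i) (v i) ∧ nuclearNorm Z = ∑ i, s i := by
  obtain ⟨W, V, s, hs, hW, hV, hZ, hnorm⟩ := exists_svd Z
  refine ⟨s, W.col, V.col, hs, fun i hi => ⟨?_, ?_⟩, hZ.trans (mul_diagonal_mul_transpose W s V),
    hnorm⟩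
  · exact col_dotProduct_self_eq_one hW i
  · exact (congrFun (congrFun hV i) i).trans (by simp [hi])

section Duality

variable {a b : ℕ}

lemma finner_sum_smul_vecMulVec {ι : Type*} [Fintype ι] (G : Matrix (Fin a) (Fin b) ℝ)
    (s : ι → ℝ) (w : ι → Fin a → ℝ) (v : ι → Fin b → ℝ) :
    finner G (∑ i, s i • vecMulVec (w i) (v i)) = ∑ i, s i * (w i ⬝ᵥ (G *ᵥ v i)) := by
  rw [← finnerₗ_apply, map_sum]
  simp only [map_smul, finnerₗ_apply, finner_vecMulVec, smul_eq_mul]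

namespace IsContraction

variable {G : Matrix (Fin a) (Fin b) ℝ}

lemma dotProduct_mulVec_mul_le {s : ℝ} (hG : IsContraction G) (hs : 0 ≤ s) {w : Fin a → ℝ}
    {v : Fin b → ℝ} (hunit : s ≠ 0 → w ⬝ᵥ w = 1 ∧ v ⬝ᵥ v = 1) : s * (w ⬝ᵥ (G *ᵥ v)) ≤ s := by
  rcases eq_or_ne s 0 with rfl | hs0
  · simp
  · obtain ⟨hw, hv⟩ := hunit hs0
    exact mul_le_of_le_one_right hs (hG.dotProduct_mulVec_le_one hw hv)

lemma finner_le_nuclearNorm (hG : IsContraction G) (Z : Matrix (Fin a) (Fin b) ℝ) :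
    finner G Z ≤ nuclearNorm Z := by
  obtain ⟨s, w, v, hs, hunit, rfl, hnorm⟩ := exists_sum_smul_vecMulVec Z
  rw [hnorm, finner_sum_smul_vecMulVec]
  exact Finset.sum_le_sum fun i _ => hG.dotProduct_mulVec_mul_le (hs i) (hunit i)

lemma mulVec_eq_of_finner_eq {ι : Type*} [Fintype ι] (hG : IsContraction G) {s : ι → ℝ}
    {w : ι → Fin a → ℝ} {v : ι → Fin b → ℝ} (hs : ∀ i, 0 ≤ s i)
    (hunit : ∀ i, s i ≠ 0 → w i ⬝ᵥ w i = 1 ∧ v i ⬝ᵥ v i = 1)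
    (h : finner G (∑ i, s i • vecMulVec (w i) (v i)) = ∑ i, s i) {i : ι} (hi : s i ≠ 0) :
    G *ᵥ v i = w i ∧ Gᵀ *ᵥ w i = v i := by
  rw [finner_sum_smul_vecMulVec, Finset.sum_eq_sum_iff_of_le fun j _ =>
    hG.dotProduct_mulVec_mul_le (hs j) (hunit j)] at h
  have h1 : w i ⬝ᵥ (G *ᵥ v i) = 1 := by
    simpa [hi] using h i (Finset.mem_univ i)
  obtain ⟨hw, hv⟩ := hunit i hi
  refine ⟨hG.mulVec_eq_of_dotProduct_mulVec_eq_one hw hv h1,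
    hG.transpose.mulVec_eq_of_dotProduct_mulVec_eq_one hv hw ?_⟩
  rwa [mulVec_transpose, dotProduct_comm, ← dotProduct_mulVec]

lemma mul_eq_of_finner_eq {r : ℕ} (hG : IsContraction G) {U : Matrix (Fin a) (Fin r) ℝ}
    {V : Matrix (Fin b) (Fin r) ℝ} (hU : Uᵀ * U = 1) (hV : Vᵀ * V = 1) {d : Fin r → ℝ}
    (hd : ∀ i, 0 < d i)
    (h : finner G (U * diagonal d * Vᵀ) = nuclearNorm (U * diagonal d * Vᵀ)) :
    G * V = U ∧ Gᵀ * U = V := by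
  rw [nuclearNorm_mul_mul_transpose hU hV (PosDef.diagonal hd).posSemidef, trace_diagonal,
    mul_diagonal_mul_transpose] at h
  have halign := fun i => hG.mulVec_eq_of_finner_eq (fun i => (hd i).le)
    (fun i _ => ⟨col_dotProduct_self_eq_one hU i, col_dotProduct_self_eq_one hV i⟩) h (hd i).ne'
  exact ⟨ext_col fun i => (halign i).1, ext_col fun i => (halign i).2⟩

/-- `Y` is isometric on each right singular vector `v` of `X`, so `YᵀY v = v`, and `hstrict`
kills the component of `v` orthogonal to the columns of `V₀`. -/
lemma eq_mul_mul_transpose_of_finner_eq {r : ℕ} {Y : Matrix (Fin a) (Fin b) ℝ}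
    {U₀ : Matrix (Fin a) (Fin r) ℝ} {V₀ : Matrix (Fin b) (Fin r) ℝ} (hY : IsContraction Y)
    (hV₀ : V₀ᵀ * V₀ = 1) (hYV : Y * V₀ = U₀) (hYU : Yᵀ * U₀ = V₀)
    (hstrict : ∀ w, V₀ᵀ *ᵥ w = 0 → Yᵀ *ᵥ (Y *ᵥ w) = w → w = 0)
    {X : Matrix (Fin a) (Fin b) ℝ} (hX : finner Y X = nuclearNorm X) :
    ∃ A : Matrix (Fin r) (Fin r) ℝ, Aᵀ = A ∧ X = U₀ * A * V₀ᵀ := by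
  obtain ⟨s, w, v, hs, hunit, rfl, hnorm⟩ := exists_sum_smul_vecMulVec X
  have hpiece : ∀ i, s i ≠ 0 → v i = V₀ *ᵥ (V₀ᵀ *ᵥ v i) ∧ w i = U₀ *ᵥ (V₀ᵀ *ᵥ v i) := by
    intro i hi
    obtain ⟨hYv, hYw⟩ := hY.mulVec_eq_of_finner_eq hs hunit (hX.trans hnorm) hi
    have hv : v i = V₀ *ᵥ (V₀ᵀ *ᵥ v i) := by
      refine sub_eq_zero.mp (hstrict _ ?_ ?_)
      · rw [mulVec_sub, mulVec_mulVec, hV₀, one_mulVec, sub_self]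
      · rw [mulVec_sub, mulVec_mulVec, hYV, hYv, mulVec_sub, hYw, mulVec_mulVec, hYU]
    refine ⟨hv, ?_⟩
    rw [← hYv]
    nth_rewrite 1 [hv]
    rw [mulVec_mulVec, hYV]
  refine ⟨∑ i, s i • vecMulVec (V₀ᵀ *ᵥ v i) (V₀ᵀ *ᵥ v i), ?_, ?_⟩
  · simp only [transpose_sum, transpose_smul, transpose_vecMulVec]
  · rw [Matrix.mul_sum, Matrix.sum_mul]
    refine Finset.sum_congr rfl fun i _ => ?_
    rcases eq_or_ne (s i) 0 with hi | hi
    · simp [hi]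
    · obtain ⟨hv, hw⟩ := hpiece i hi
      rw [Matrix.mul_smul, Matrix.smul_mul, mul_vecMulVec, vecMulVec_mul, vecMul_transpose, ← hv,
        ← hw]

end IsContraction

lemma isContraction_iff_forall_finner_le (G : Matrix (Fin a) (Fin b) ℝ) :
    IsContraction G ↔ ∀ Z, finner G Z ≤ nuclearNorm Z :=
  ⟨IsContraction.finner_le_nuclearNorm, fun h u v => by
    simpa only [finner_vecMulVec, nuclearNorm_vecMulVec] using h (vecMulVec u v)⟩

lemma forall_le_sub_iff_of_posHomogeneous {E : Type*} [AddCommGroup E] [Module ℝ E]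
    {f : E → ℝ} (hf : ∀ t : ℝ, 0 ≤ t → ∀ x, f (t • x) = t * f x) (ℓ : E →ₗ[ℝ] ℝ) (x : E) :
    (∀ z, ℓ (z - x) ≤ f z - f x) ↔ ℓ x = f x ∧ ∀ z, ℓ z ≤ f z := by
  refine ⟨fun h => ?_, fun ⟨hx, hz⟩ z => by rw [map_sub, hx]; linarith [hz z]⟩
  have hf0 : f 0 = 0 := by simpa using hf 0 le_rfl x
  have hx : f x ≤ ℓ x := by simpa [hf0] using h 0
  have hle : ∀ z, ℓ z ≤ f z := by
    intro z
    by_contra! hlt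
    set t := (ℓ x - f x + 1) / (ℓ z - f z)
    have ht : t * (ℓ z - f z) = ℓ x - f x + 1 := div_mul_cancel₀ _ (sub_pos.2 hlt).ne'
    have := h (t • z)
    rw [map_sub, map_smul, hf t (div_nonneg (by linarith) (by linarith)) z, smul_eq_mul] at this
    linarith
  exact ⟨le_antisymm (hle x) hx, hle⟩

lemma mem_nsubdiff_iff {X Y : Matrix (Fin a) (Fin b) ℝ} :
    Y ∈ nsubdiff X ↔ finner Y X = nuclearNorm X ∧ IsContraction Y := by
  rw [isContraction_iff_forall_finner_le]
  exact forall_le_sub_iff_of_posHomogeneous (fun t ht Z => nuclearNorm_smul Z ht) (finnerₗ Y) X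

end Duality

lemma exists_add_smul_sub_mem_of_mem_intrinsicInterior {E : Type*} [AddCommGroup E]
    [Module ℝ E] [TopologicalSpace E] [IsTopologicalAddGroup E] [ContinuousSMul ℝ E] {s : Set E}
    {y z : E} (hy : y ∈ intrinsicInterior ℝ s) (hz : z ∈ s) :
    ∃ ε : ℝ, 0 < ε ∧ y + ε • (y - z) ∈ s := by
  obtain ⟨y', hy', rfl⟩ := hy
  have hline : ∀ t : ℝ, ↑y' + t • (↑y' - z) ∈ affineSpan ℝ s := fun t => by
    simpa [vsub_eq_sub, vadd_eq_add, add_comm] using AffineSubspace.smul_vsub_vadd_mem _ t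
      y'.2 (subset_affineSpan ℝ s hz) y'.2
  let c : ℝ → affineSpan ℝ s := fun t => ⟨_, hline t⟩
  have hc : Continuous c := by fun_prop
  have h0 : (0 : ℝ) ∈ c ⁻¹' interior ((↑) ⁻¹' s) := by simpa [c] using hy'
  obtain ⟨δ, hδ, hball⟩ := Metric.isOpen_iff.mp (isOpen_interior.preimage hc) 0 h0
  refine ⟨δ / 2, half_pos hδ, (interior_subset (hball ?_) : c (δ / 2) ∈ (↑) ⁻¹' s)⟩
  rw [Metric.mem_ball, Real.dist_0_eq_abs, abs_of_pos (half_pos hδ)]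
  exact half_lt_self hδ

section RelativeInterior

variable {a b : ℕ}

/-- Flipping the pair gives the subgradient `Y - 2 u wᵀ`; moving from it through `Y` and beyond
would give a subgradient `Y'` with `⟨Y', u wᵀ⟩ > 1 = ‖X + u wᵀ‖_* - ‖X‖_*`. -/
lemma mulVec_ne_of_mem_intrinsicInterior_nsubdiff {X Y : Matrix (Fin a) (Fin b) ℝ}
    (hY : Y ∈ intrinsicInterior ℝ (nsubdiff X)) {u : Fin a → ℝ} {w : Fin b → ℝ}
    (hu : u ⬝ᵥ u = 1) (hw : w ⬝ᵥ w = 1) (hXu : Xᵀ *ᵥ u = 0) (hXw : X *ᵥ w = 0) :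
    Y *ᵥ w ≠ u := by
  intro hYw
  obtain ⟨hYX, hY1⟩ := mem_nsubdiff_iff.mp (intrinsicInterior_subset hY)
  set K := vecMulVec u w
  have hXK : finner X K = 0 := by rw [finner_vecMulVec, hXw, dotProduct_zero]
  have hKY : finner K Y = 1 := by rw [finner_comm, finner_vecMulVec, hYw, hu]
  have hKK : finner K K = 1 := by rw [finner_vecMulVec, vecMulVec_mulVec]; simp [hu, hw]
  have hflip : Y - (2 : ℝ) • K ∈ nsubdiff X := by
    refine mem_nsubdiff_iff.mpr ⟨?_, hY1.sub_two_smul_vecMulVec hw hYw⟩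
    rw [finner_comm, ← finnerₗ_apply, map_sub, map_smul, finnerₗ_apply, finnerₗ_apply,
      finner_comm, hYX, hXK, smul_zero, sub_zero]
  obtain ⟨ε, hε, hmem⟩ := exists_add_smul_sub_mem_of_mem_intrinsicInterior hY hflip
  have h := hmem (X + K)
  rw [add_sub_cancel_left, nuclearNorm_add_vecMulVec hu hw hXu hXw, finner_comm, ← finnerₗ_apply,
    sub_sub_cancel, map_add, map_smul, map_smul, finnerₗ_apply, finnerₗ_apply, hKY, hKK] at h
  simp only [smul_eq_mul, mul_one, add_sub_cancel_left, add_le_iff_nonpos_right] at h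
  linarith

lemma eq_zero_of_mem_intrinsicInterior_nsubdiff {r : ℕ} {X Y : Matrix (Fin a) (Fin b) ℝ}
    {U₀ : Matrix (Fin a) (Fin r) ℝ} {V₀ : Matrix (Fin b) (Fin r) ℝ} {M : Matrix (Fin r) (Fin r) ℝ}
    (hY : Y ∈ intrinsicInterior ℝ (nsubdiff X)) (hX : X = U₀ * M * V₀ᵀ) (hYU : Yᵀ * U₀ = V₀)
    {w : Fin b → ℝ} (hVw : V₀ᵀ *ᵥ w = 0) (hYYw : Yᵀ *ᵥ (Y *ᵥ w) = w) : w = 0 := by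
  by_contra hw0
  have hXw : X *ᵥ w = 0 := by rw [hX, ← mulVec_mulVec, hVw, mulVec_zero]
  have hXYw : Xᵀ *ᵥ (Y *ᵥ w) = 0 := by
    have hUY : U₀ᵀ * Y = V₀ᵀ := by rw [← hYU, transpose_mul, transpose_transpose]
    rw [hX, mulVec_mulVec, transpose_mul, transpose_mul, transpose_transpose, Matrix.mul_assoc,
      Matrix.mul_assoc, hUY, ← mulVec_mulVec, ← mulVec_mulVec, hVw, mulVec_zero, mulVec_zero]
  have hYw : (Y *ᵥ w) ⬝ᵥ (Y *ᵥ w) = w ⬝ᵥ w := by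
    rw [dotProduct_mulVec, ← mulVec_transpose, hYYw]
  set c := (√(w ⬝ᵥ w))⁻¹
  have hc : c * c * (w ⬝ᵥ w) = 1 := by
    rw [← mul_inv, Real.mul_self_sqrt (dotProduct_self_nonneg w),
      inv_mul_cancel₀ (mt dotProduct_self_eq_zero.mp hw0)]
  refine mulVec_ne_of_mem_intrinsicInterior_nsubdiff hY (u := c • (Y *ᵥ w)) (w := c • w) ?_ ?_
    (by rw [mulVec_smul, hXYw, smul_zero]) (by rw [mulVec_smul, hXw, smul_zero]) (mulVec_smul _ _ _)
  · rw [smul_dotProduct, dotProduct_smul, hYw, smul_eq_mul, smul_eq_mul, ← mul_assoc, hc]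
  · rw [smul_dotProduct, dotProduct_smul, smul_eq_mul, smul_eq_mul, ← mul_assoc, hc]

end RelativeInterior

section Perturbation

variable {n : Type*} [Fintype n]

lemma abs_dotProduct_mulVec_le (A : Matrix n n ℝ) (x : n → ℝ) :
    |x ⬝ᵥ (A *ᵥ x)| ≤ (∑ i, ∑ j, |A i j|) * (x ⬝ᵥ x) := by
  have hx : ∀ i j, |x i| * |x j| ≤ x ⬝ᵥ x := fun i j => by
    have hle : ∀ k, x k * x k ≤ x ⬝ᵥ x := fun k =>
      Finset.single_le_sum (f := fun k => x k * x k) (fun k _ => mul_self_nonneg (x k))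
        (Finset.mem_univ k)
    nlinarith [sq_nonneg (|x i| - |x j|), abs_mul_abs_self (x i), abs_mul_abs_self (x j),
      hle i, hle j]
  calc |x ⬝ᵥ (A *ᵥ x)| = |∑ i, ∑ j, x i * (A i j * x j)| := by
        simp only [dotProduct, mulVec, Finset.mul_sum]
    _ ≤ ∑ i, ∑ j, |A i j| * (x ⬝ᵥ x) := by
        refine (Finset.abs_sum_le_sum_abs _ _).trans (Finset.sum_le_sum fun i _ => ?_)
        refine (Finset.abs_sum_le_sum_abs _ _).trans (Finset.sum_le_sum fun j _ => ?_)
        rw [abs_mul, abs_mul, mul_left_comm]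
        exact mul_le_mul_of_nonneg_left (hx i j) (abs_nonneg _)
    _ = (∑ i, ∑ j, |A i j|) * (x ⬝ᵥ x) := by simp only [Finset.sum_mul]

lemma exists_posSemidef_diagonal_add_smul [DecidableEq n] {d : n → ℝ} (hd : ∀ i, 0 < d i)
    {A : Matrix n n ℝ} (hA : Aᵀ = A) :
    ∃ t : ℝ, 0 < t ∧ ∀ σ : ℝ, |σ| ≤ t → (diagonal d + σ • A).PosSemidef := by
  obtain ⟨m, hm, hmd⟩ : ∃ m > 0, ∀ i, m ≤ d i := by
    rcases isEmpty_or_nonempty n with hn | hn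
    · exact ⟨1, one_pos, isEmptyElim⟩
    · obtain ⟨i₀, -, hi₀⟩ := Finset.univ.exists_min_image d Finset.univ_nonempty
      exact ⟨d i₀, hd i₀, fun i => hi₀ i (Finset.mem_univ i)⟩
  set c := ∑ i, ∑ j, |A i j|
  have hc : 0 ≤ c := by positivity
  refine ⟨m / (c + 1), by positivity, fun σ hσ => ?_⟩
  have hherm : (diagonal d + σ • A).IsHermitian := by
    rw [IsHermitian, conjTranspose_eq_transpose_of_trivial, transpose_add, transpose_smul,
      diagonal_transpose, hA]
  refine PosSemidef.of_dotProduct_mulVec_nonneg hherm fun x => ?_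
  have hdiag : m * (x ⬝ᵥ x) ≤ x ⬝ᵥ (diagonal d *ᵥ x) := by
    simp only [dotProduct, mulVec_diagonal, Finset.mul_sum]
    exact Finset.sum_le_sum fun i _ => by nlinarith [hmd i, mul_self_nonneg (x i)]
  have hσA : |σ * (x ⬝ᵥ (A *ᵥ x))| ≤ m * (x ⬝ᵥ x) := by
    rw [abs_mul]
    calc |σ| * |x ⬝ᵥ (A *ᵥ x)| ≤ m / (c + 1) * (c * (x ⬝ᵥ x)) :=
          mul_le_mul hσ (abs_dotProduct_mulVec_le A x) (abs_nonneg _) (by positivity)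
      _ ≤ m * (x ⬝ᵥ x) := by
          rw [← mul_assoc]
          refine mul_le_mul_of_nonneg_right ?_ (dotProduct_self_nonneg x)
          rw [div_mul_eq_mul_div, div_le_iff₀ (by positivity)]
          nlinarith
  rw [star_trivial, add_mulVec, dotProduct_add, smul_mulVec, dotProduct_smul, smul_eq_mul]
  linarith [neg_abs_le (σ * (x ⬝ᵥ (A *ᵥ x)))]

end Perturbation

lemma exists_nuclearNorm_add_add_nuclearNorm_sub {a b r : ℕ} {U : Matrix (Fin a) (Fin r) ℝ}
    {V : Matrix (Fin b) (Fin r) ℝ} (hU : Uᵀ * U = 1) (hV : Vᵀ * V = 1) {d : Fin r → ℝ}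
    (hd : ∀ i, 0 < d i) {A : Matrix (Fin r) (Fin r) ℝ} (hA : Aᵀ = A) :
    ∃ t : ℝ, 0 < t ∧ nuclearNorm (U * diagonal d * Vᵀ + t • (U * A * Vᵀ)) +
      nuclearNorm (U * diagonal d * Vᵀ - t • (U * A * Vᵀ)) =
      2 * nuclearNorm (U * diagonal d * Vᵀ) := by
  obtain ⟨t, ht, hpsd⟩ := exists_posSemidef_diagonal_add_smul hd hA
  have hline : ∀ σ : ℝ, |σ| ≤ t → nuclearNorm (U * diagonal d * Vᵀ + σ • (U * A * Vᵀ)) =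
      (diagonal d).trace + σ * A.trace := fun σ hσ => by
    rw [← Matrix.smul_mul, ← Matrix.mul_smul, ← Matrix.add_mul, ← Matrix.mul_add,
      nuclearNorm_mul_mul_transpose hU hV (hpsd σ hσ), trace_add, trace_smul, smul_eq_mul]
  refine ⟨t, ht, ?_⟩
  rw [sub_eq_add_neg, ← neg_smul, hline t (abs_of_pos ht).le,
    hline (-t) (by rw [abs_neg, abs_of_pos ht]), nuclearNorm_mul_mul_transpose hU hV (PosDef.diagonal hd).posSemidef]
  ring

lemma eq_zero_of_mem_ker_of_forall_lt {a b r : ℕ} {F : Type*} [AddCommGroup F] [Module ℝ F]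
    {Φ : Matrix (Fin a) (Fin b) ℝ →ₗ[ℝ] F} {U : Matrix (Fin a) (Fin r) ℝ}
    {V : Matrix (Fin b) (Fin r) ℝ} (hU : Uᵀ * U = 1) (hV : Vᵀ * V = 1) {d : Fin r → ℝ}
    (hd : ∀ i, 0 < d i) {X₀ : Matrix (Fin a) (Fin b) ℝ} (hX₀ : X₀ = U * diagonal d * Vᵀ)
    (huniq : ∀ X, Φ X = Φ X₀ → X ≠ X₀ → nuclearNorm X₀ < nuclearNorm X)
    {A : Matrix (Fin r) (Fin r) ℝ} (hA : Aᵀ = A) (hZ : Φ (U * A * Vᵀ) = 0) : U * A * Vᵀ = 0 := by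
  by_contra hZ0
  obtain ⟨t, ht, hflat⟩ := exists_nuclearNorm_add_add_nuclearNorm_sub hU hV hd hA
  have hfeas : ∀ σ : ℝ, Φ (X₀ + σ • (U * A * Vᵀ)) = Φ X₀ := fun σ => by
    rw [map_add, map_smul, hZ, smul_zero, add_zero]
  have hne : ∀ σ : ℝ, σ ≠ 0 → X₀ + σ • (U * A * Vᵀ) ≠ X₀ := fun σ hσ => by
    simpa [hσ] using hZ0
  have h_add := huniq _ (hfeas t) (hne t ht.ne')
  have h_sub := huniq _ (hfeas (-t)) (hne (-t) (neg_ne_zero.mpr ht.ne'))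
  rw [neg_smul, ← sub_eq_add_neg] at h_sub
  subst hX₀
  linarith

lemma exists_eq_mul_mul_transpose_of_mem_intrinsicInterior {a b r : ℕ}
    {X₀ Y : Matrix (Fin a) (Fin b) ℝ} (hY : Y ∈ intrinsicInterior ℝ (nsubdiff X₀))
    {U : Matrix (Fin a) (Fin r) ℝ} {V : Matrix (Fin b) (Fin r) ℝ} (hU : Uᵀ * U = 1)
    (hV : Vᵀ * V = 1) {d : Fin r → ℝ} (hd : ∀ i, 0 < d i) (hX₀ : X₀ = U * diagonal d * Vᵀ)
    {X : Matrix (Fin a) (Fin b) ℝ} (hX : finner Y X = nuclearNorm X) :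
    ∃ A : Matrix (Fin r) (Fin r) ℝ, Aᵀ = A ∧ X = U * A * Vᵀ := by
  obtain ⟨hYX₀, hYc⟩ := mem_nsubdiff_iff.mp (intrinsicInterior_subset hY)
  obtain ⟨hYV, hYU⟩ := hYc.mul_eq_of_finner_eq hU hV hd (hX₀ ▸ hYX₀)
  exact hYc.eq_mul_mul_transpose_of_finner_eq hV hYV hYU
    (fun _ => eq_zero_of_mem_intrinsicInterior_nsubdiff hY hX₀ hYU) hX

theorem strict_restricted_injectivity_general (n1 n2 m r : ℕ)
    (Φ : Matrix (Fin n1) (Fin n2) ℝ →ₗ[ℝ] EuclideanSpace ℝ (Fin m))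
    (Φadj : EuclideanSpace ℝ (Fin m) →ₗ[ℝ] Matrix (Fin n1) (Fin n2) ℝ)
    (hadj : ∀ (u : EuclideanSpace ℝ (Fin m)) (X : Matrix (Fin n1) (Fin n2) ℝ),
      (inner ℝ (Φ X) u : ℝ) = finner (Φadj u) X)
    (X₀ : Matrix (Fin n1) (Fin n2) ℝ)
    -- compact SVD X₀ = U₀ Σ₀ V₀ᵀ
    (U₀ : Matrix (Fin n1) (Fin r) ℝ) (V₀ : Matrix (Fin n2) (Fin r) ℝ)
    (d : Fin r → ℝ)
    (hU₀ : U₀ᵀ * U₀ = 1) (hV₀ : V₀ᵀ * V₀ = 1)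
    (hd_pos : ∀ i, 0 < d i)
    (hSVD : X₀ = U₀ * Matrix.diagonal d * V₀ᵀ) :
    ((∀ X, Φ X = Φ X₀ → X ≠ X₀ → nuclearNorm X₀ < nuclearNorm X) →
      (LinearMap.ker Φ : Set (Matrix (Fin n1) (Fin n2) ℝ)) ∩
        {Z | ∃ A : Matrix (Fin r) (Fin r) ℝ, Aᵀ = A ∧ Z = U₀ * A * V₀ᵀ} = {0}) ∧
    ((Set.range Φadj ∩ intrinsicInterior ℝ (nsubdiff X₀)).Nonempty →
      ((LinearMap.ker Φ : Set (Matrix (Fin n1) (Fin n2) ℝ)) ∩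
          {Z | ∃ A : Matrix (Fin r) (Fin r) ℝ, Aᵀ = A ∧ Z = U₀ * A * V₀ᵀ} = {0}) →
      (∀ X, Φ X = Φ X₀ → X ≠ X₀ → nuclearNorm X₀ < nuclearNorm X)) := by
  refine ⟨fun huniq => Set.eq_singleton_iff_unique_mem.mpr
    ⟨⟨map_zero Φ, 0, by simp, by simp⟩, ?_⟩, ?_⟩
  · rintro _ ⟨hZ, A, hA, rfl⟩
    exact eq_zero_of_mem_ker_of_forall_lt hU₀ hV₀ hd_pos hSVD huniq hA hZ
  · rintro ⟨Y, ⟨u, rfl⟩, hY⟩ hSRI X hX hne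
    have hker : finner (Φadj u) (X - X₀) = 0 := by
      rw [← hadj, map_sub, hX, sub_self, inner_zero_left]
    have hYX₀ := (mem_nsubdiff_iff.mp (intrinsicInterior_subset hY)).1
    refine lt_of_le_of_ne (by linarith [intrinsicInterior_subset hY X]) fun heq => hne ?_
    have hYX : finner (Φadj u) X = nuclearNorm X := by
      rw [finner_sub_right] at hker
      linarith
    obtain ⟨A, hA, hXA⟩ :=
      exists_eq_mul_mul_transpose_of_mem_intrinsicInterior hY hU₀ hV₀ hd_pos hSVD hYX
    have hmem : X - X₀ ∈ (LinearMap.ker Φ : Set (Matrix (Fin n1) (Fin n2) ℝ)) ∩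
        {Z | ∃ A : Matrix (Fin r) (Fin r) ℝ, Aᵀ = A ∧ Z = U₀ * A * V₀ᵀ} :=
      ⟨by simp [hX], A - diagonal d, by rw [transpose_sub, hA, diagonal_transpose],
        by rw [hXA, hSVD, ← Matrix.sub_mul, ← Matrix.mul_sub]⟩
    rw [hSRI] at hmem
    exact sub_eq_zero.mp hmem

/-- **Corollary (Strict Restricted Injectivity).**
Let `X₀` be an optimal solution of `min ‖X‖_* s.t. ΦX = ΦX₀` with compact SVD
`X₀ = U₀ Σ₀ V₀ᵀ`, `r = rank X₀`.
(i) If `X₀` is the unique solution then `Ker Φ ∩ U₀ S^r V₀ᵀ = {0}` (Strict Restricted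
Injectivity).
(ii) If moreover the Nondegenerate Source Condition `Im Φ* ∩ ri ∂‖X₀‖_* ≠ ∅` holds,
then Strict Restricted Injectivity implies that `X₀` is the unique solution. -/
theorem strict_restricted_injectivity (n1 n2 m r : ℕ) (hn : n1 ≤ n2)
    (Φ : Matrix (Fin n1) (Fin n2) ℝ →ₗ[ℝ] EuclideanSpace ℝ (Fin m))
    (Φadj : EuclideanSpace ℝ (Fin m) →ₗ[ℝ] Matrix (Fin n1) (Fin n2) ℝ)
    (hadj : ∀ (u : EuclideanSpace ℝ (Fin m)) (X : Matrix (Fin n1) (Fin n2) ℝ),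
      (inner ℝ (Φ X) u : ℝ) = finner (Φadj u) X)
    (X₀ : Matrix (Fin n1) (Fin n2) ℝ) (hr : X₀.rank = r)
    -- compact SVD X₀ = U₀ Σ₀ V₀ᵀ
    (U₀ : Matrix (Fin n1) (Fin r) ℝ) (V₀ : Matrix (Fin n2) (Fin r) ℝ)
    (d : Fin r → ℝ)
    (hU₀ : U₀ᵀ * U₀ = 1) (hV₀ : V₀ᵀ * V₀ = 1)
    (hd_pos : ∀ i, 0 < d i) (hd_dec : Antitone d)
    (hSVD : X₀ = U₀ * Matrix.diagonal d * V₀ᵀ)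
    -- X₀ is an optimal solution
    (hopt : ∀ X, Φ X = Φ X₀ → nuclearNorm X₀ ≤ nuclearNorm X) :
    ((∀ X, Φ X = Φ X₀ → X ≠ X₀ → nuclearNorm X₀ < nuclearNorm X) →
      (LinearMap.ker Φ : Set (Matrix (Fin n1) (Fin n2) ℝ)) ∩
        {Z | ∃ A : Matrix (Fin r) (Fin r) ℝ, Aᵀ = A ∧ Z = U₀ * A * V₀ᵀ} = {0}) ∧
    ((Set.range Φadj ∩ intrinsicInterior ℝ (nsubdiff X₀)).Nonempty →
      ((LinearMap.ker Φ : Set (Matrix (Fin n1) (Fin n2) ℝ)) ∩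
          {Z | ∃ A : Matrix (Fin r) (Fin r) ℝ, Aᵀ = A ∧ Z = U₀ * A * V₀ᵀ} = {0}) →
      (∀ X, Φ X = Φ X₀ → X ≠ X₀ → nuclearNorm X₀ < nuclearNorm X)) :=
  strict_restricted_injectivity_general n1 n2 m r Φ Φadj hadj X₀ U₀ V₀ d hU₀ hV₀ hd_pos hSVD
end
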